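/- arXiv:1809.01178 — 13 statements merged into one kernel-verified Lean document; each statement's English description precedes it below -/
import Mathlib

section
/- Let -1 ≤ x_1 < … < x_{N+1} ≤ 1 be N+1 distinct nodes with weights w_1,…,w_{N+1} ∈ ℝ such that Σ_{k=1}^{N+1} w_k p(x_k) = ∫_{-1}^{1} p(x) dx for every real polynomial p of degree ≤ 2N-1. Let ℓ_j denote the degree-N Lagrange basis polynomials at these nodes (ℓ_j(x_i) = δ_{ij}), and define the (N+1)×(N+1) matrices W = diag(w_1,…,w_{N+1}), D with D_{ij} = ℓ_j'(x_i), and Q = W D; the 2×(N+1) matrix V_f with (V_f)_{1j} = ℓ_j(-1) and (V_f)_{2j} = ℓ_j(1); and B = diag(-1,1). Then Q satisfies the generalized summation-by-parts property Q = V_fᵀ B V_f - Qᵀ. -/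
open Matrix BigOperators

/-- **Generalized SBP property for nodal collocation operators.**
Let `-1 ≤ x 0 < … < x N ≤ 1` be `N+1` distinct nodes with weights `w` such that the
quadrature rule is exact for all polynomials of degree `≤ 2N-1` (equivalently, of degree
`< 2N`).  Let `ℓ j` be the degree-`N` Lagrange basis polynomials at these nodes,
`W = diag w`, `D` the nodal differentiation matrix, `Q = W * D`, `Vf` the matrix
interpolating to the endpoints `-1` and `1`, and `B = diag (-1, 1)`.
Then `Q = Vfᵀ * B * Vf - Qᵀ`. -/
theorem gsbp_property_of_quadrature
    (N : ℕ) (x w : Fin (N + 1) → ℝ)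
    (hx_mono : StrictMono x)
    (hx_lo : ∀ i, (-1 : ℝ) ≤ x i) (hx_hi : ∀ i, x i ≤ 1)
    (hquad : ∀ p : Polynomial ℝ, p.degree < (2 * N : ℕ) →
      ∑ k, w k * p.eval (x k) = ∫ t in (-1 : ℝ)..1, p.eval t)
    (ℓ : Fin (N + 1) → Polynomial ℝ)
    (hℓdeg : ∀ j, (ℓ j).degree ≤ (N : ℕ))
    (hℓdelta : ∀ i j, (ℓ j).eval (x i) = if i = j then (1 : ℝ) else 0)
    (W D Q : Matrix (Fin (N + 1)) (Fin (N + 1)) ℝ)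
    (hW : W = Matrix.diagonal w)
    (hD : ∀ i j, D i j = (Polynomial.derivative (ℓ j)).eval (x i))
    (hQ : Q = W * D)
    (Vf : Matrix (Fin 2) (Fin (N + 1)) ℝ)
    (hVf0 : ∀ j, Vf 0 j = (ℓ j).eval (-1))
    (hVf1 : ∀ j, Vf 1 j = (ℓ j).eval 1)
    (B : Matrix (Fin 2) (Fin 2) ℝ)
    (hB : B = Matrix.diagonal ![(-1 : ℝ), 1]) :
    Q = Vfᵀ * B * Vf - Qᵀ := by

  -- Key identity: for each i j, w i * ℓj'(x i) + w j * ℓi'(x j) = ℓi(1)ℓj(1) - ℓi(-1)ℓj(-1)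
  have key : ∀ i j, w i * (Polynomial.derivative (ℓ j)).eval (x i)
      + w j * (Polynomial.derivative (ℓ i)).eval (x j)
      = (ℓ i).eval 1 * (ℓ j).eval 1 - (ℓ i).eval (-1) * (ℓ j).eval (-1) := by
    intro i j
    set p := ℓ i * ℓ j with hp
    have hdeg : (Polynomial.derivative p).degree < (2 * N : ℕ) := by
      by_cases h0 : p = 0
      · simp only [h0, map_zero, Polynomial.degree_zero]
        exact WithBot.bot_lt_coe _
      · calc (Polynomial.derivative p).degree < p.degree := Polynomial.degree_derivative_lt h0
          _ ≤ (N : ℕ) + (N : ℕ) := le_trans (Polynomial.degree_mul_le _ _)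
              (add_le_add (hℓdeg i) (hℓdeg j))
          _ = ((2 * N : ℕ) : WithBot ℕ) := by
              rw [two_mul]; exact_mod_cast rfl
    have hq := hquad (Polynomial.derivative p) hdeg
    have hint : (∫ t in (-1:ℝ)..1, (Polynomial.derivative p).eval t)
        = p.eval 1 - p.eval (-1) := by
      have := intervalIntegral.integral_deriv_eq_sub
        (f := fun t : ℝ => p.eval t) (a := -1) (b := 1)
        (fun t _ => (p.hasDerivAt t).differentiableAt)
        (by
          rw [show (deriv fun t : ℝ => p.eval t)
              = fun t => (Polynomial.derivative p).eval t from
            funext fun t => Polynomial.deriv _]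
          exact (Polynomial.continuous _).intervalIntegrable _ _)
      rw [show (deriv fun t : ℝ => p.eval t)
          = fun t => (Polynomial.derivative p).eval t from
        funext fun t => Polynomial.deriv _] at this
      simpa using this
    have hsum : ∑ k, w k * (Polynomial.derivative p).eval (x k)
        = w i * (Polynomial.derivative (ℓ j)).eval (x i)
          + w j * (Polynomial.derivative (ℓ i)).eval (x j) := by
      have : ∀ k, w k * (Polynomial.derivative p).eval (x k)
          = (if k = j then w k * (Polynomial.derivative (ℓ i)).eval (x k) else 0)
            + (if k = i then w k * (Polynomial.derivative (ℓ j)).eval (x k) else 0) := by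
        intro k
        rw [hp, Polynomial.derivative_mul]
        simp [hℓdelta]
        split_ifs <;> ring
      rw [Finset.sum_congr rfl fun k _ => this k, Finset.sum_add_distrib,
        Finset.sum_ite_eq' , Finset.sum_ite_eq']
      simp [add_comm]
    rw [hsum, hint] at hq
    rw [hq, hp]
    simp [mul_comm]
  ext i j
  have hQe : ∀ a b, Q a b = w a * (Polynomial.derivative (ℓ b)).eval (x a) := by
    intro a b
    simp [hQ, hW, hD, Matrix.mul_apply, Matrix.diagonal_apply, Finset.sum_ite_eq]
  have hVB : (Vfᵀ * B * Vf) i j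
      = (ℓ i).eval 1 * (ℓ j).eval 1 - (ℓ i).eval (-1) * (ℓ j).eval (-1) := by
    simp [Matrix.mul_apply, hB, Fin.sum_univ_two, Matrix.diagonal_apply, hVf0, hVf1]
    ring
  simp only [Matrix.sub_apply, Matrix.transpose_apply, hVB, hQe]
  have := key i j
  linarith
end

section
/- Assume the SBP property Q + Qᵀ = V_fᵀ B V_f. Define the (N+3)×(N+3) decoupled SBP operator as the block matrix Q_N = [[Q - (1/2)V_fᵀ B V_f, (1/2)V_fᵀ B],[-(1/2)B V_f, (1/2)B]]. Then Q_N + Q_Nᵀ equals the block-diagonal matrix blockdiag(0_{(N+1)×(N+1)}, B). -/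
open Matrix BigOperators

/-- Under the SBP property `Q + Qᵀ = Vfᵀ * B * Vf`, the decoupled SBP operator
`Q_N = [[Q - (1/2)VfᵀBVf, (1/2)VfᵀB], [-(1/2)BVf, (1/2)B]]` satisfies
`Q_N + Q_Nᵀ = blockdiag(0, B)`. -/
theorem decoupled_sbp_property
    (N : ℕ) (w : Fin (N + 1) → ℝ)
    (W Q : Matrix (Fin (N + 1)) (Fin (N + 1)) ℝ)
    (hW : W = Matrix.diagonal w)
    (Vf : Matrix (Fin 2) (Fin (N + 1)) ℝ)
    (B : Matrix (Fin 2) (Fin 2) ℝ)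
    (hB : B = Matrix.diagonal ![(-1 : ℝ), 1])
    (hSBP : Q + Qᵀ = Vfᵀ * B * Vf)
    (QN : Matrix (Fin (N + 1) ⊕ Fin 2) (Fin (N + 1) ⊕ Fin 2) ℝ)
    (hQN : QN = Matrix.fromBlocks
      (Q - (1 / 2 : ℝ) • (Vfᵀ * B * Vf)) ((1 / 2 : ℝ) • (Vfᵀ * B))
      (-((1 / 2 : ℝ) • (B * Vf))) ((1 / 2 : ℝ) • B)) :
    QN + QNᵀ = Matrix.fromBlocks 0 0 0 B := by
  have hBT : Bᵀ = B := by subst hB; simp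
  subst hQN
  rw [Matrix.fromBlocks_transpose, Matrix.fromBlocks_add]
  simp only [Matrix.transpose_sub, Matrix.transpose_neg, Matrix.transpose_smul,
    Matrix.transpose_mul, Matrix.transpose_transpose, hBT]
  have h11 : Q - (1/2 : ℝ) • (Vfᵀ * B * Vf) + (Qᵀ - (1/2 : ℝ) • (Vfᵀ * (B * Vf))) = 0 := by
    have h : Q + Qᵀ - (Vfᵀ * B * Vf) = 0 := by rw [hSBP]; simp
    calc Q - (1/2 : ℝ) • (Vfᵀ * B * Vf) + (Qᵀ - (1/2 : ℝ) • (Vfᵀ * (B * Vf)))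
        = Q + Qᵀ - (Vfᵀ * B * Vf) := by rw [← Matrix.mul_assoc]; module
      _ = 0 := h
  have h12 : (1/2 : ℝ) • (Vfᵀ * B) + -((1/2 : ℝ) • (Vfᵀ * B)) = 0 := by abel
  have h21 : -((1/2 : ℝ) • (B * Vf)) + (1/2 : ℝ) • (B * Vf) = 0 := by abel
  have h22 : (1/2 : ℝ) • B + (1/2 : ℝ) • B = B := by module
  rw [h11, h12, h21, h22]
end

section
/- Assume the SBP property Q + Qᵀ = V_fᵀ B V_f. Define the 2(N+1)×2(N+1) coupled two-element matrix Q_h = [[S, (1/2)t_R t_Lᵀ],[-(1/2)t_L t_Rᵀ, S]] + (1/2)·blockdiag(-t_L t_Lᵀ, t_R t_Rᵀ) and B_h = blockdiag(-t_L t_Lᵀ, t_R t_Rᵀ). Then Q_h satisfies the SBP property Q_h + Q_hᵀ = B_h. -/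
open Matrix BigOperators

/-- Under the SBP property `Q + Qᵀ = Vfᵀ * B * Vf`, the coupled two-element matrix
`Q_h = [[S, (1/2) t_R t_Lᵀ], [-(1/2) t_L t_Rᵀ, S]] + (1/2) blockdiag(-t_L t_Lᵀ, t_R t_Rᵀ)`
satisfies the SBP property `Q_h + Q_hᵀ = B_h` with
`B_h = blockdiag(-t_L t_Lᵀ, t_R t_Rᵀ)`. -/
theorem coupled_two_element_sbp
    (N : ℕ) (w : Fin (N + 1) → ℝ)
    (W Q : Matrix (Fin (N + 1)) (Fin (N + 1)) ℝ)
    (hW : W = Matrix.diagonal w)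
    (Vf : Matrix (Fin 2) (Fin (N + 1)) ℝ)
    (B : Matrix (Fin 2) (Fin 2) ℝ)
    (hB : B = Matrix.diagonal ![(-1 : ℝ), 1])
    (hSBP : Q + Qᵀ = Vfᵀ * B * Vf)
    (tL tR : Fin (N + 1) → ℝ)
    (htL : ∀ j, tL j = Vf 0 j) (htR : ∀ j, tR j = Vf 1 j)
    (S : Matrix (Fin (N + 1)) (Fin (N + 1)) ℝ)
    (hS : S = Q - (1 / 2 : ℝ) • (Vfᵀ * B * Vf))
    (Qh Bh : Matrix (Fin (N + 1) ⊕ Fin (N + 1)) (Fin (N + 1) ⊕ Fin (N + 1)) ℝ)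
    (hQh : Qh = Matrix.fromBlocks
        S ((1 / 2 : ℝ) • Matrix.vecMulVec tR tL)
        (-((1 / 2 : ℝ) • Matrix.vecMulVec tL tR)) S
      + (1 / 2 : ℝ) • Matrix.fromBlocks (-Matrix.vecMulVec tL tL) 0 0 (Matrix.vecMulVec tR tR))
    (hBh : Bh = Matrix.fromBlocks (-Matrix.vecMulVec tL tL) 0 0 (Matrix.vecMulVec tR tR)) :
    Qh + Qhᵀ = Bh := by
  have hM : (Vfᵀ * B * Vf)ᵀ = Vfᵀ * B * Vf := by
    rw [hB, Matrix.transpose_mul, Matrix.transpose_mul, Matrix.transpose_transpose,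
      Matrix.diagonal_transpose, Matrix.mul_assoc]
  have hSskew : S + Sᵀ = 0 := by
    rw [hS, Matrix.transpose_sub, Matrix.transpose_smul, hM, sub_add_sub_comm, hSBP,
      ← add_smul]
    norm_num
  have hs : ∀ a b, S a b + S b a = 0 := by
    intro a b
    have := congrFun (congrFun hSskew a) b
    simpa using this
  rw [hQh, hBh]
  ext i j
  rcases i with i | i <;> rcases j with j | j <;>
    simp [Matrix.fromBlocks, Matrix.vecMulVec, Matrix.add_apply, Matrix.smul_apply,
      Matrix.neg_apply, Matrix.transpose_apply] <;>
    first
      | linear_combination hs i j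
      | ring
end

section
/- Let -1 ≤ x_1 < … < x_{N+1} ≤ 1 be N+1 distinct nodes, ℓ_j the degree-N Lagrange basis polynomials at these nodes, D_{ij} = ℓ_j'(x_i), V_f the 2×(N+1) matrix with (V_f)_{1j} = ℓ_j(-1), (V_f)_{2j} = ℓ_j(1) and rows t_Lᵀ, t_Rᵀ, B = diag(-1,1), and let W = diag(w_1,…,w_{N+1}) be any invertible diagonal matrix. Set Q = WD, S = Q - (1/2)V_fᵀ B V_f, W_h = blockdiag(W,W), Q_h = [[S, (1/2)t_R t_Lᵀ],[-(1/2)t_L t_Rᵀ, S]] + (1/2)·blockdiag(-t_L t_Lᵀ, t_R t_Rᵀ), and D_h = W_h⁻¹ Q_h. Then D_h differentiates global polynomials of degree N exactly on the two-element mesh of translated reference elements: for every real polynomial p of degree ≤ N, with u¹ = (p(x_i - 1))_{i=1}^{N+1} and u² = (p(x_i + 1))_{i=1}^{N+1}, one has D_h (u¹; u²) = ((p'(x_i - 1))_{i=1}^{N+1} ; (p'(x_i + 1))_{i=1}^{N+1}). -/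
open Matrix BigOperators Polynomial

lemma lagrange_interp_aux {N : ℕ} (x : Fin (N + 1) → ℝ) (hx : Function.Injective x)
    (ℓ : Fin (N + 1) → Polynomial ℝ)
    (hℓdeg : ∀ j, (ℓ j).degree ≤ (N : ℕ))
    (hℓdelta : ∀ i j, (ℓ j).eval (x i) = if i = j then (1 : ℝ) else 0)
    (q : Polynomial ℝ) (hq : q.natDegree ≤ N) :
    q = ∑ j, Polynomial.C (q.eval (x j)) * ℓ j := by
  have h0 : (q - ∑ j, Polynomial.C (q.eval (x j)) * ℓ j) = 0 := by
    apply Polynomial.eq_zero_of_natDegree_lt_card_of_eval_eq_zero _ hx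
    · intro i
      simp only [Polynomial.eval_sub, Polynomial.eval_finset_sum, Polynomial.eval_mul,
        Polynomial.eval_C, hℓdelta]
      simp
    · have h1 : (q - ∑ j, Polynomial.C (q.eval (x j)) * ℓ j).degree ≤ (N : ℕ) := by
        apply le_trans (Polynomial.degree_sub_le _ _)
        apply max_le
        · exact le_trans Polynomial.degree_le_natDegree (by exact_mod_cast hq)
        · apply le_trans (Polynomial.degree_sum_le _ _)
          apply Finset.sup_le
          intro j _
          exact le_trans (Polynomial.degree_mul_le _ _)
            (by simpa using add_le_add (Polynomial.degree_C_le) (hℓdeg j))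
      have := Polynomial.natDegree_le_iff_degree_le.mpr h1
      simpa [Fintype.card_fin] using lt_of_le_of_lt this (Nat.lt_succ_self N)
  exact (sub_eq_zero.mp h0)

/-- The coupled two-element operator `D_h = W_h⁻¹ Q_h` differentiates global polynomials of
degree `≤ N` exactly on the two-element mesh consisting of the translated reference elements
`[-2,0]` and `[0,2]` (with nodes `x i - 1` and `x i + 1` respectively). -/
theorem two_element_operator_exact_for_polynomials
    (N : ℕ) (x w : Fin (N + 1) → ℝ)
    (hx_mono : StrictMono x)
    (hx_lo : ∀ i, (-1 : ℝ) ≤ x i) (hx_hi : ∀ i, x i ≤ 1)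
    (ℓ : Fin (N + 1) → Polynomial ℝ)
    (hℓdeg : ∀ j, (ℓ j).degree ≤ (N : ℕ))
    (hℓdelta : ∀ i j, (ℓ j).eval (x i) = if i = j then (1 : ℝ) else 0)
    (hw : ∀ i, w i ≠ 0)
    (W D Q : Matrix (Fin (N + 1)) (Fin (N + 1)) ℝ)
    (hW : W = Matrix.diagonal w)
    (hD : ∀ i j, D i j = (Polynomial.derivative (ℓ j)).eval (x i))
    (hQ : Q = W * D)
    (Vf : Matrix (Fin 2) (Fin (N + 1)) ℝ)
    (hVf0 : ∀ j, Vf 0 j = (ℓ j).eval (-1))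
    (hVf1 : ∀ j, Vf 1 j = (ℓ j).eval 1)
    (B : Matrix (Fin 2) (Fin 2) ℝ)
    (hB : B = Matrix.diagonal ![(-1 : ℝ), 1])
    (tL tR : Fin (N + 1) → ℝ)
    (htL : ∀ j, tL j = Vf 0 j) (htR : ∀ j, tR j = Vf 1 j)
    (S : Matrix (Fin (N + 1)) (Fin (N + 1)) ℝ)
    (hS : S = Q - (1 / 2 : ℝ) • (Vfᵀ * B * Vf))
    (Wh Qh Dh : Matrix (Fin (N + 1) ⊕ Fin (N + 1)) (Fin (N + 1) ⊕ Fin (N + 1)) ℝ)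
    (hWh : Wh = Matrix.fromBlocks W 0 0 W)
    (hQh : Qh = Matrix.fromBlocks
        S ((1 / 2 : ℝ) • Matrix.vecMulVec tR tL)
        (-((1 / 2 : ℝ) • Matrix.vecMulVec tL tR)) S
      + (1 / 2 : ℝ) • Matrix.fromBlocks (-Matrix.vecMulVec tL tL) 0 0 (Matrix.vecMulVec tR tR))
    (hDh : Dh = Wh⁻¹ * Qh) :
    ∀ p : Polynomial ℝ, p.natDegree ≤ N →
      Dh *ᵥ (Sum.elim (fun i => p.eval (x i - 1)) (fun i => p.eval (x i + 1)))
        = Sum.elim (fun i => (Polynomial.derivative p).eval (x i - 1))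
            (fun i => (Polynomial.derivative p).eval (x i + 1)) := by
  intro p hp
  have hxinj : Function.Injective x := hx_mono.injective
  -- the two local polynomials on the reference element
  set q₁ : Polynomial ℝ := p.comp (Polynomial.X - Polynomial.C 1) with hq₁def
  set q₂ : Polynomial ℝ := p.comp (Polynomial.X + Polynomial.C 1) with hq₂def
  have hq₁eval : ∀ y : ℝ, q₁.eval y = p.eval (y - 1) := by intro y; simp [hq₁def]
  have hq₂eval : ∀ y : ℝ, q₂.eval y = p.eval (y + 1) := by intro y; simp [hq₂def]
  have hq₁deriv : ∀ y : ℝ, (Polynomial.derivative q₁).eval y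
      = (Polynomial.derivative p).eval (y - 1) := by
    intro y
    simp [hq₁def, Polynomial.derivative_comp]
  have hq₂deriv : ∀ y : ℝ, (Polynomial.derivative q₂).eval y
      = (Polynomial.derivative p).eval (y + 1) := by
    intro y
    simp [hq₂def, Polynomial.derivative_comp]
  have hq₁deg : q₁.natDegree ≤ N := by
    rw [hq₁def, Polynomial.natDegree_comp, Polynomial.natDegree_X_sub_C, mul_one]; exact hp
  have hq₂deg : q₂.natDegree ≤ N := by
    rw [hq₂def, Polynomial.natDegree_comp, Polynomial.natDegree_X_add_C, mul_one]; exact hp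
  -- interpolation consequences
  have key : ∀ q : Polynomial ℝ, q.natDegree ≤ N →
      (∀ y : ℝ, q.eval y = ∑ j, q.eval (x j) * (ℓ j).eval y) ∧
      (∀ y : ℝ, (Polynomial.derivative q).eval y
        = ∑ j, q.eval (x j) * (Polynomial.derivative (ℓ j)).eval y) := by
    intro q hq
    have hrep := lagrange_interp_aux x hxinj ℓ hℓdeg hℓdelta q hq
    constructor
    · intro y
      conv_lhs => rw [hrep]
      simp [Polynomial.eval_finset_sum]
    · intro y
      conv_lhs => rw [hrep]
      rw [map_sum]
      simp [Polynomial.eval_finset_sum]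
  obtain ⟨hE1, hd1⟩ := key q₁ hq₁deg
  obtain ⟨hE2, hd2⟩ := key q₂ hq₂deg
  -- the vectors
  set a : Fin (N + 1) → ℝ := fun i => p.eval (x i - 1) with ha
  set b : Fin (N + 1) → ℝ := fun i => p.eval (x i + 1) with hb
  have hqa : ∀ j, q₁.eval (x j) = a j := fun j => hq₁eval (x j)
  have hqb : ∀ j, q₂.eval (x j) = b j := fun j => hq₂eval (x j)
  -- scalar identities
  have F1 : ∀ i, ∑ j, D i j * a j = (Polynomial.derivative p).eval (x i - 1) := by
    intro i
    rw [← hq₁deriv (x i), hd1 (x i)]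
    exact Finset.sum_congr rfl fun j _ => by rw [hD, hqa]; ring
  have F2 : ∀ i, ∑ j, D i j * b j = (Polynomial.derivative p).eval (x i + 1) := by
    intro i
    rw [← hq₂deriv (x i), hd2 (x i)]
    exact Finset.sum_congr rfl fun j _ => by rw [hD, hqb]; ring
  have F3 : ∑ j, tR j * a j = p.eval 0 := by
    have := hE1 1
    rw [hq₁eval 1] at this
    norm_num at this
    rw [this]
    exact Finset.sum_congr rfl fun j _ => by rw [htR, hVf1, hqa]; ring
  have F4 : ∑ j, tL j * b j = p.eval 0 := by
    have := hE2 (-1)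
    rw [hq₂eval (-1)] at this
    norm_num at this
    rw [this]
    exact Finset.sum_congr rfl fun j _ => by rw [htL, hVf0, hqb]; ring
  -- entries of Qh
  have hVBV : ∀ i j, (Vfᵀ * B * Vf) i j = -(tL i * tL j) + tR i * tR j := by
    intro i j
    rw [Matrix.mul_apply]
    have : ∀ a : Fin 2, (Vfᵀ * B) i a = Vf a i * B a a := by
      intro c
      rw [Matrix.mul_apply, Fin.sum_univ_two]
      fin_cases c <;> simp [hB, Matrix.diagonal, Matrix.transpose_apply] <;> ring
    rw [Fin.sum_univ_two, this 0, this 1, htL i, htR i, htL j, htR j]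
    simp [hB, Matrix.diagonal]
  have hSentry : ∀ i j, S i j = w i * D i j + (1/2) * (tL i * tL j) - (1/2) * (tR i * tR j) := by
    intro i j
    rw [hS, hQ, hW]
    simp only [Matrix.sub_apply, Matrix.smul_apply, hVBV, smul_eq_mul,
      Matrix.diagonal_mul, Matrix.smul_apply]
    ring
  -- invertibility of Wh
  have hdetW : W.det ≠ 0 := by
    rw [hW, Matrix.det_diagonal]
    exact Finset.prod_ne_zero_iff.mpr fun i _ => hw i
  have hdetWh : Wh.det ≠ 0 := by
    rw [hWh, Matrix.det_fromBlocks_zero₂₁]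
    exact mul_ne_zero hdetW hdetW
  -- the main computation: Qh *ᵥ u = Wh *ᵥ v
  set u : Fin (N + 1) ⊕ Fin (N + 1) → ℝ := Sum.elim a b with hu
  set v : Fin (N + 1) ⊕ Fin (N + 1) → ℝ :=
    Sum.elim (fun i => (Polynomial.derivative p).eval (x i - 1))
      (fun i => (Polynomial.derivative p).eval (x i + 1)) with hv
  have hmain : Qh *ᵥ u = Wh *ᵥ v := by
    funext k
    cases k with
    | inl i =>
      have lhs_eq : (Qh *ᵥ u) (Sum.inl i)
          = ∑ j, (w i * D i j - (1/2) * (tR i * tR j)) * a j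
            + ∑ j, ((1/2) * (tR i * tL j)) * b j := by
        rw [Matrix.mulVec, dotProduct, Fintype.sum_sum_type]
        congr 1
        · refine Finset.sum_congr rfl fun j _ => ?_
          rw [hQh]
          simp only [Matrix.add_apply, Matrix.fromBlocks_apply₁₁, Matrix.smul_apply,
            Matrix.neg_apply, Matrix.vecMulVec_apply, smul_eq_mul, hu, Sum.elim_inl]
          rw [hSentry]
          ring
        · refine Finset.sum_congr rfl fun j _ => ?_
          rw [hQh]
          simp only [Matrix.add_apply, Matrix.fromBlocks_apply₁₂, Matrix.smul_apply,
            Matrix.vecMulVec_apply, smul_eq_mul, Matrix.zero_apply, hu, Sum.elim_inr]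
          ring
      rw [lhs_eq]
      have rhs_eq : (Wh *ᵥ v) (Sum.inl i) = w i * (Polynomial.derivative p).eval (x i - 1) := by
        rw [Matrix.mulVec, dotProduct, Fintype.sum_sum_type]
        rw [hWh, hW]
        simp [Matrix.diagonal, Finset.sum_ite_eq, hv]
      rw [rhs_eq]
      have e1 : ∑ j, (w i * D i j - (1/2) * (tR i * tR j)) * a j
          = w i * (∑ j, D i j * a j) - (1/2) * tR i * (∑ j, tR j * a j) := by
        rw [Finset.mul_sum, Finset.mul_sum, ← Finset.sum_sub_distrib]
        exact Finset.sum_congr rfl fun j _ => by ring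
      have e2 : ∑ j, ((1/2) * (tR i * tL j)) * b j
          = (1/2) * tR i * (∑ j, tL j * b j) := by
        rw [Finset.mul_sum]
        exact Finset.sum_congr rfl fun j _ => by ring
      rw [e1, e2, F1, F3, F4]
      ring
    | inr i =>
      have lhs_eq : (Qh *ᵥ u) (Sum.inr i)
          = ∑ j, (-((1/2) * (tL i * tR j))) * a j
            + ∑ j, (w i * D i j + (1/2) * (tL i * tL j)) * b j := by
        rw [Matrix.mulVec, dotProduct, Fintype.sum_sum_type]
        congr 1
        · refine Finset.sum_congr rfl fun j _ => ?_
          rw [hQh]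
          simp only [Matrix.add_apply, Matrix.fromBlocks_apply₂₁, Matrix.smul_apply,
            Matrix.neg_apply, Matrix.vecMulVec_apply, smul_eq_mul, Matrix.zero_apply,
            hu, Sum.elim_inl]
          ring
        · refine Finset.sum_congr rfl fun j _ => ?_
          rw [hQh]
          simp only [Matrix.add_apply, Matrix.fromBlocks_apply₂₂, Matrix.smul_apply,
            Matrix.vecMulVec_apply, smul_eq_mul, hu, Sum.elim_inr]
          rw [hSentry]
          ring
      rw [lhs_eq]
      have rhs_eq : (Wh *ᵥ v) (Sum.inr i) = w i * (Polynomial.derivative p).eval (x i + 1) := by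
        rw [Matrix.mulVec, dotProduct, Fintype.sum_sum_type]
        rw [hWh, hW]
        simp [Matrix.diagonal, Finset.sum_ite_eq, hv]
      rw [rhs_eq]
      have e1 : ∑ j, (-((1/2) * (tL i * tR j))) * a j
          = -((1/2) * tL i * (∑ j, tR j * a j)) := by
        rw [Finset.mul_sum, ← Finset.sum_neg_distrib]
        exact Finset.sum_congr rfl fun j _ => by ring
      have e2 : ∑ j, (w i * D i j + (1/2) * (tL i * tL j)) * b j
          = w i * (∑ j, D i j * b j) + (1/2) * tL i * (∑ j, tL j * b j) := by
        rw [Finset.mul_sum, Finset.mul_sum, ← Finset.sum_add_distrib]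
        exact Finset.sum_congr rfl fun j _ => by ring
      rw [e1, e2, F2, F3, F4]
      ring
  -- conclude
  have : Dh *ᵥ u = Wh⁻¹ *ᵥ (Wh *ᵥ v) := by
    rw [hDh, ← Matrix.mulVec_mulVec, hmain]
  show Dh *ᵥ u = v
  rw [this, Matrix.mulVec_mulVec, Matrix.nonsing_inv_mul _ (Ne.isUnit hdetWh), Matrix.one_mulVec]
end

section
/- Assume Q 1 = 0 (each row of Q sums to zero) and V_f 1 = 1 (each row of V_f sums to one, i.e., t_Lᵀ1 = t_Rᵀ1 = 1). With e_L = (1,0)ᵀ, e_R = (0,1)ᵀ ∈ ℝ², define the 2(N+3)×2(N+3) two-element decoupled matrix Q_h with block rows and columns ordered as (element-1 volume nodes, element-1 face nodes, element-2 volume nodes, element-2 face nodes): Q_h = [[S, (1/2)V_fᵀB, 0, 0],[-(1/2)BV_f, -(1/2)e_L e_Lᵀ, 0, (1/2)e_R e_Lᵀ],[0, 0, S, (1/2)V_fᵀB],[0, -(1/2)e_L e_Rᵀ, -(1/2)BV_f, (1/2)e_R e_Rᵀ]]. Then Q_h 1 = 0, i.e., every row of Q_h sums to zero. -/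
open Matrix BigOperators

/-- If each row of `Q` sums to zero and each row of `Vf` sums to one, then every row of the
two-element decoupled operator `Q_h` sums to zero: `Q_h 1 = 0`. -/
theorem two_element_decoupled_rows_sum_zero
    (N : ℕ) (w : Fin (N + 1) → ℝ)
    (W Q : Matrix (Fin (N + 1)) (Fin (N + 1)) ℝ)
    (hW : W = Matrix.diagonal w)
    (Vf : Matrix (Fin 2) (Fin (N + 1)) ℝ)
    (B : Matrix (Fin 2) (Fin 2) ℝ)
    (hB : B = Matrix.diagonal ![(-1 : ℝ), 1])
    (hQ1 : Q *ᵥ (fun _ => (1 : ℝ)) = 0)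
    (hVf1 : Vf *ᵥ (fun _ => (1 : ℝ)) = fun _ => (1 : ℝ))
    (eL eR : Fin 2 → ℝ)
    (heL : eL = ![1, 0]) (heR : eR = ![0, 1])
    (S : Matrix (Fin (N + 1)) (Fin (N + 1)) ℝ)
    (hS : S = Q - (1 / 2 : ℝ) • (Vfᵀ * B * Vf))
    (Qh : Matrix ((Fin (N + 1) ⊕ Fin 2) ⊕ (Fin (N + 1) ⊕ Fin 2))
                 ((Fin (N + 1) ⊕ Fin 2) ⊕ (Fin (N + 1) ⊕ Fin 2)) ℝ)
    (hQh : Qh = Matrix.fromBlocks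
      (Matrix.fromBlocks S ((1 / 2 : ℝ) • (Vfᵀ * B))
        (-((1 / 2 : ℝ) • (B * Vf))) (-((1 / 2 : ℝ) • Matrix.vecMulVec eL eL)))
      (Matrix.fromBlocks 0 0 0 ((1 / 2 : ℝ) • Matrix.vecMulVec eR eL))
      (Matrix.fromBlocks 0 0 0 (-((1 / 2 : ℝ) • Matrix.vecMulVec eL eR)))
      (Matrix.fromBlocks S ((1 / 2 : ℝ) • (Vfᵀ * B))
        (-((1 / 2 : ℝ) • (B * Vf))) ((1 / 2 : ℝ) • Matrix.vecMulVec eR eR))) :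
    Qh *ᵥ (fun _ => (1 : ℝ)) = 0 := by
  have hone : (fun _ : (Fin (N+1) ⊕ Fin 2) ⊕ (Fin (N+1) ⊕ Fin 2) => (1:ℝ))
      = Sum.elim (Sum.elim (fun _ => (1:ℝ)) (fun _ => (1:ℝ)))
                 (Sum.elim (fun _ => (1:ℝ)) (fun _ => (1:ℝ))) := by
    funext x; rcases x with (x|x) | (x|x) <;> rfl
  have hdiag : Matrix.diagonal ![(-1:ℝ), 1] *ᵥ (fun _ : Fin 2 => (1:ℝ)) = ![(-1:ℝ), 1] := by
    funext i
    rw [Matrix.mulVec_diagonal]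
    rcases i with ⟨(_|_), h⟩ <;> norm_num
  have hBV : (B * Vf) *ᵥ (fun _ => (1:ℝ)) = ![(-1:ℝ), 1] := by
    rw [← Matrix.mulVec_mulVec, hVf1, hB, hdiag]
  have hVB : (Vfᵀ * B) *ᵥ (fun _ => (1:ℝ)) = Vfᵀ *ᵥ ![(-1:ℝ), 1] := by
    rw [← Matrix.mulVec_mulVec, hB, hdiag]
  have hS1 : S *ᵥ (fun _ => (1:ℝ)) = -((1/2:ℝ) • (Vfᵀ *ᵥ ![(-1:ℝ), 1])) := by
    rw [hS, Matrix.sub_mulVec, hQ1, Matrix.smul_mulVec,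
      ← Matrix.mulVec_mulVec, hVf1, hVB]
    simp
  have hvv : ∀ a : Fin 2 → ℝ, ∀ b : Fin 2 → ℝ,
      Matrix.vecMulVec a b *ᵥ (fun _ => (1:ℝ)) = (b ⬝ᵥ fun _ => (1:ℝ)) • a := by
    intro a b
    funext i
    simp [Matrix.vecMulVec_apply, Matrix.mulVec, dotProduct, Fin.sum_univ_two, mul_add]
    ring
  have hdL : ∀ c : Fin 2 → ℝ, (c ⬝ᵥ fun _ => (1:ℝ)) = c 0 + c 1 := by
    intro c; simp [dotProduct, Fin.sum_univ_two]
  rw [hQh, hone, Matrix.fromBlocks_mulVec]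
  simp only [Sum.elim_comp_inl, Sum.elim_comp_inr]
  rw [Matrix.fromBlocks_mulVec, Matrix.fromBlocks_mulVec,
    Matrix.fromBlocks_mulVec, Matrix.fromBlocks_mulVec]
  simp only [Sum.elim_comp_inl, Sum.elim_comp_inr, Matrix.zero_mulVec,
    Matrix.neg_mulVec, Matrix.smul_mulVec, hS1, hVB, hBV, hvv, hdL,
    heL, heR]
  funext x
  rcases x with (x|x) | (x|x) <;>
    simp <;>
    (try rcases x with ⟨(_|_), h⟩) <;>
    norm_num [Matrix.cons_val_zero, Matrix.cons_val_one]
end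

section
/- Let Q be any (N+1)×(N+1) real matrix, V_f any 2×(N+1) real matrix with rows t_Lᵀ, t_Rᵀ, B = diag(-1,1), e_L = (1,0)ᵀ, e_R = (0,1)ᵀ, and S = Q - (1/2)V_fᵀ B V_f. Let Q_h be the 2(N+3)×2(N+3) two-element decoupled matrix with blocks ordered as (element-1 volume nodes, element-1 face nodes, element-2 volume nodes, element-2 face nodes): Q_h = [[S, (1/2)V_fᵀB, 0, 0],[-(1/2)BV_f, -(1/2)e_L e_Lᵀ, 0, (1/2)e_R e_Lᵀ],[0, 0, S, (1/2)V_fᵀB],[0, -(1/2)e_L e_Rᵀ, -(1/2)BV_f, (1/2)e_R e_Rᵀ]], and let I_h = blockdiag([I_{N+1}; V_f], [I_{N+1}; V_f]) be the 2(N+3)×2(N+1) block interpolation matrix. Then I_hᵀ Q_h I_h = [[S, (1/2)t_R t_Lᵀ],[-(1/2)t_L t_Rᵀ, S]] + blockdiag(-(1/2)t_L t_Lᵀ, (1/2)t_R t_Rᵀ), i.e., the decoupled two-element operator reduces under interpolation to the coupled generalized-SBP two-element operator. -/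
open Matrix

/-! Conjugating by `[I; V]` turns a block `[[S, c Vᵀ B], [-c B V, D]]` into `S + Vᵀ D V`, because
the two face-coupling terms `± c Vᵀ B V` cancel. The remaining rank-one face terms become
`Vᵀ (u vᵀ) V = (Vᵀ u) (Vᵀ v)ᵀ`, and `e_L`, `e_R` select the rows `t_L`, `t_R` of `V_f`. -/

namespace Matrix

variable {R m n : Type*} [CommRing R] [Fintype m]

section

variable [Fintype n] [DecidableEq n]

theorem transpose_fromRows_one_mul_fromBlocks_mul_fromRows_one (V : Matrix m n R)
    (A : Matrix n n R) (B : Matrix n m R) (C : Matrix m n R) (D : Matrix m m R) :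
    (fromRows (1 : Matrix n n R) V)ᵀ * fromBlocks A B C D * fromRows (1 : Matrix n n R) V
      = A + B * V + Vᵀ * C + Vᵀ * D * V := by
  rw [transpose_fromRows, transpose_one, fromCols_mul_fromBlocks, fromCols_mul_fromRows]
  simp only [Matrix.one_mul, Matrix.mul_one, Matrix.add_mul, Matrix.mul_assoc]
  abel

theorem transpose_fromRows_one_mul_fromBlocks_skew_mul_fromRows_one (V : Matrix m n R)
    (c : R) (B : Matrix m m R) (S : Matrix n n R) (D : Matrix m m R) :
    (fromRows (1 : Matrix n n R) V)ᵀ * fromBlocks S (c • (Vᵀ * B)) (-(c • (B * V))) D *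
        fromRows (1 : Matrix n n R) V
      = S + Vᵀ * D * V := by
  rw [transpose_fromRows_one_mul_fromBlocks_mul_fromRows_one, Matrix.mul_neg, Matrix.mul_smul,
    Matrix.smul_mul, Matrix.mul_assoc]
  abel

theorem transpose_fromRows_one_mul_fromBlocks_zero_mul_fromRows_one (V : Matrix m n R)
    (D : Matrix m m R) :
    (fromRows (1 : Matrix n n R) V)ᵀ * (fromBlocks 0 0 0 D : Matrix (n ⊕ m) (n ⊕ m) R) *
      fromRows (1 : Matrix n n R) V = Vᵀ * D * V := by
  simp [transpose_fromRows_one_mul_fromBlocks_mul_fromRows_one]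

end

theorem transpose_fromBlocks_diag_mul_fromBlocks_mul_fromBlocks_diag
    (P : Matrix m n R) (A B C D : Matrix m m R) :
    (fromBlocks P 0 0 P : Matrix (m ⊕ m) (n ⊕ n) R)ᵀ * fromBlocks A B C D * fromBlocks P 0 0 P
      = fromBlocks (Pᵀ * A * P) (Pᵀ * B * P) (Pᵀ * C * P) (Pᵀ * D * P) := by
  simp [fromBlocks_transpose, fromBlocks_multiply]

theorem transpose_mul_vecMulVec_mul (A : Matrix m n R) (u v : m → R) :
    Aᵀ * vecMulVec u v * A = vecMulVec (u ᵥ* A) (v ᵥ* A) := by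
  rw [mul_vecMulVec, vecMulVec_mul, mulVec_transpose]

end Matrix

theorem decoupled_reduces_to_coupled_general
    (N : ℕ)
    (Vf : Matrix (Fin 2) (Fin (N + 1)) ℝ)
    (B : Matrix (Fin 2) (Fin 2) ℝ)
    (tL tR : Fin (N + 1) → ℝ)
    (htL : ∀ j, tL j = Vf 0 j) (htR : ∀ j, tR j = Vf 1 j)
    (eL eR : Fin 2 → ℝ)
    (heL : eL = ![1, 0]) (heR : eR = ![0, 1])
    (S : Matrix (Fin (N + 1)) (Fin (N + 1)) ℝ)
    (Qh : Matrix ((Fin (N + 1) ⊕ Fin 2) ⊕ (Fin (N + 1) ⊕ Fin 2))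
                 ((Fin (N + 1) ⊕ Fin 2) ⊕ (Fin (N + 1) ⊕ Fin 2)) ℝ)
    (hQh : Qh = Matrix.fromBlocks
      (Matrix.fromBlocks S ((1 / 2 : ℝ) • (Vfᵀ * B))
        (-((1 / 2 : ℝ) • (B * Vf))) (-((1 / 2 : ℝ) • Matrix.vecMulVec eL eL)))
      (Matrix.fromBlocks 0 0 0 ((1 / 2 : ℝ) • Matrix.vecMulVec eR eL))
      (Matrix.fromBlocks 0 0 0 (-((1 / 2 : ℝ) • Matrix.vecMulVec eL eR)))
      (Matrix.fromBlocks S ((1 / 2 : ℝ) • (Vfᵀ * B))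
        (-((1 / 2 : ℝ) • (B * Vf))) ((1 / 2 : ℝ) • Matrix.vecMulVec eR eR)))
    (Ih : Matrix ((Fin (N + 1) ⊕ Fin 2) ⊕ (Fin (N + 1) ⊕ Fin 2))
                 (Fin (N + 1) ⊕ Fin (N + 1)) ℝ)
    (hIh : Ih = Matrix.fromBlocks
      (Matrix.fromRows (1 : Matrix (Fin (N + 1)) (Fin (N + 1)) ℝ) Vf) 0
      0 (Matrix.fromRows (1 : Matrix (Fin (N + 1)) (Fin (N + 1)) ℝ) Vf)) :
    Ihᵀ * Qh * Ih
      = Matrix.fromBlocks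
          S ((1 / 2 : ℝ) • Matrix.vecMulVec tR tL)
          (-((1 / 2 : ℝ) • Matrix.vecMulVec tL tR)) S
        + Matrix.fromBlocks (-((1 / 2 : ℝ) • Matrix.vecMulVec tL tL)) 0 0
            ((1 / 2 : ℝ) • Matrix.vecMulVec tR tR) := by
  have hL : eL ᵥ* Vf = tL := by
    ext j
    simp [heL, htL, vecMul, dotProduct]
  have hR : eR ᵥ* Vf = tR := by
    ext j
    simp [heR, htR, vecMul, dotProduct]
  subst hQh hIh
  rw [transpose_fromBlocks_diag_mul_fromBlocks_mul_fromBlocks_diag,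
    transpose_fromRows_one_mul_fromBlocks_skew_mul_fromRows_one,
    transpose_fromRows_one_mul_fromBlocks_skew_mul_fromRows_one,
    transpose_fromRows_one_mul_fromBlocks_zero_mul_fromRows_one,
    transpose_fromRows_one_mul_fromBlocks_zero_mul_fromRows_one, fromBlocks_add]
  simp only [Matrix.mul_neg, Matrix.neg_mul, Matrix.mul_smul, Matrix.smul_mul,
    transpose_mul_vecMulVec_mul, hL, hR, add_zero]

/-- The two-element decoupled operator `Q_h` reduces under the block interpolation matrix
`I_h = blockdiag([I; V_f], [I; V_f])` to the coupled generalized-SBP two-element operator: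
`I_hᵀ Q_h I_h = [[S, (1/2) t_R t_Lᵀ], [-(1/2) t_L t_Rᵀ, S]]
  + blockdiag(-(1/2) t_L t_Lᵀ, (1/2) t_R t_Rᵀ)`. -/
theorem decoupled_reduces_to_coupled
    (N : ℕ)
    (Q : Matrix (Fin (N + 1)) (Fin (N + 1)) ℝ)
    (Vf : Matrix (Fin 2) (Fin (N + 1)) ℝ)
    (B : Matrix (Fin 2) (Fin 2) ℝ)
    (hB : B = Matrix.diagonal ![(-1 : ℝ), 1])
    (tL tR : Fin (N + 1) → ℝ)
    (htL : ∀ j, tL j = Vf 0 j) (htR : ∀ j, tR j = Vf 1 j)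
    (eL eR : Fin 2 → ℝ)
    (heL : eL = ![1, 0]) (heR : eR = ![0, 1])
    (S : Matrix (Fin (N + 1)) (Fin (N + 1)) ℝ)
    (hS : S = Q - (1 / 2 : ℝ) • (Vfᵀ * B * Vf))
    (Qh : Matrix ((Fin (N + 1) ⊕ Fin 2) ⊕ (Fin (N + 1) ⊕ Fin 2))
                 ((Fin (N + 1) ⊕ Fin 2) ⊕ (Fin (N + 1) ⊕ Fin 2)) ℝ)
    (hQh : Qh = Matrix.fromBlocks
      (Matrix.fromBlocks S ((1 / 2 : ℝ) • (Vfᵀ * B))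
        (-((1 / 2 : ℝ) • (B * Vf))) (-((1 / 2 : ℝ) • Matrix.vecMulVec eL eL)))
      (Matrix.fromBlocks 0 0 0 ((1 / 2 : ℝ) • Matrix.vecMulVec eR eL))
      (Matrix.fromBlocks 0 0 0 (-((1 / 2 : ℝ) • Matrix.vecMulVec eL eR)))
      (Matrix.fromBlocks S ((1 / 2 : ℝ) • (Vfᵀ * B))
        (-((1 / 2 : ℝ) • (B * Vf))) ((1 / 2 : ℝ) • Matrix.vecMulVec eR eR)))
    (Ih : Matrix ((Fin (N + 1) ⊕ Fin 2) ⊕ (Fin (N + 1) ⊕ Fin 2))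
                 (Fin (N + 1) ⊕ Fin (N + 1)) ℝ)
    (hIh : Ih = Matrix.fromBlocks
      (Matrix.fromRows (1 : Matrix (Fin (N + 1)) (Fin (N + 1)) ℝ) Vf) 0
      0 (Matrix.fromRows (1 : Matrix (Fin (N + 1)) (Fin (N + 1)) ℝ) Vf)) :
    Ihᵀ * Qh * Ih
      = Matrix.fromBlocks
          S ((1 / 2 : ℝ) • Matrix.vecMulVec tR tL)
          (-((1 / 2 : ℝ) • Matrix.vecMulVec tL tR)) S
        + Matrix.fromBlocks (-((1 / 2 : ℝ) • Matrix.vecMulVec tL tL)) 0 0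
            ((1 / 2 : ℝ) • Matrix.vecMulVec tR tR) :=
  decoupled_reduces_to_coupled_general N Vf B tL tR htL htR eL eR heL heR S Qh hQh Ih hIh
end

section
/- Let W = diag(w_1,…,w_{N+1}) be an invertible diagonal matrix, Q any (N+1)×(N+1) real matrix, V_f any 2×(N+1) real matrix, B = diag(-1,1), D = W⁻¹Q, and Q_N = [[Q - (1/2)V_fᵀ B V_f, (1/2)V_fᵀ B],[-(1/2)B V_f, (1/2)B]] the (N+3)×(N+3) decoupled SBP operator. Then for all vectors f, g ∈ ℝ^{N+1} and f_f, g_f ∈ ℝ², writing f_N = (f; f_f) and g_N = (g; g_f), the following identity holds: W⁻¹ [I_{N+1}; V_f]ᵀ diag(f_N) Q_N g_N = diag(f) D g + (1/2) diag(f) W⁻¹ V_fᵀ B (g_f - V_f g) + (1/2) W⁻¹ V_fᵀ B diag(f_f) (g_f - V_f g). -/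
/-!
Multiplying out the blocks, `[I, V_fᵀ] diag(f_N) Q_N g_N` equals
`diag(f) Q g + (1/2) (diag(f) V_fᵀ B + V_fᵀ diag(f_f) B) (g_f - V_f g)`: the correction
`-(1/2) V_fᵀ B V_f` and the lower-left block `-(1/2) B V_f` of `Q_N` are exactly what turn the
face values `g_f` into the penalty `g_f - V_f g`. Diagonal matrices commute, so `W⁻¹` moves past
`diag(f)` and `diag(f_f)` past `B`.
-/

open Matrix

namespace Matrix

variable {l m n R : Type*} [Fintype m] [Fintype n] [CommRing R]

def decoupledSBP (c : R) (Q : Matrix n n R) (V : Matrix m n R) (B : Matrix m m R) :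
    Matrix (n ⊕ m) (n ⊕ m) R :=
  fromBlocks (Q - c • (Vᵀ * B * V)) (c • (Vᵀ * B)) (-(c • (B * V))) (c • B)

theorem fromCols_mul_decoupledSBP_mulVec (c : R) (Q : Matrix n n R) (V : Matrix m n R)
    (B : Matrix m m R) (P : Matrix l n R) (S : Matrix l m R) (g : n → R) (gf : m → R) :
    (fromCols P S * decoupledSBP c Q V B) *ᵥ Sum.elim g gf
      = (P * Q) *ᵥ g + c • ((P * Vᵀ * B + S * B) *ᵥ (gf - V *ᵥ g)) := by
  simp only [decoupledSBP, fromCols_mul_fromBlocks, fromCols_mulVec_sumElim, Matrix.mul_sub,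
    Matrix.mul_neg, Matrix.mul_smul, Matrix.sub_mulVec, Matrix.add_mulVec, Matrix.neg_mulVec,
    Matrix.smul_mulVec, Matrix.mulVec_sub, Matrix.mulVec_mulVec, Matrix.add_mul,
    Matrix.mul_assoc, smul_sub, smul_add]
  abel

theorem transpose_fromRows_one_mul_diagonal_sumElim [DecidableEq m] [DecidableEq n]
    (V : Matrix m n R) (f : n → R) (ff : m → R) :
    (fromRows (1 : Matrix n n R) V)ᵀ * diagonal (Sum.elim f ff)
      = fromCols (diagonal f) (Vᵀ * diagonal ff) := by
  rw [transpose_fromRows, transpose_one, ← fromBlocks_diagonal, fromCols_mul_fromBlocks]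
  simp

end Matrix

theorem decoupled_sbp_strong_form_general
    (N : ℕ) (w : Fin (N + 1) → ℝ)
    (W Q D : Matrix (Fin (N + 1)) (Fin (N + 1)) ℝ)
    (hW : W = Matrix.diagonal w)
    (hD : D = W⁻¹ * Q)
    (Vf : Matrix (Fin 2) (Fin (N + 1)) ℝ)
    (B : Matrix (Fin 2) (Fin 2) ℝ)
    (hB : B = Matrix.diagonal ![(-1 : ℝ), 1])
    (QN : Matrix (Fin (N + 1) ⊕ Fin 2) (Fin (N + 1) ⊕ Fin 2) ℝ)
    (hQN : QN = Matrix.fromBlocks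
      (Q - (1 / 2 : ℝ) • (Vfᵀ * B * Vf)) ((1 / 2 : ℝ) • (Vfᵀ * B))
      (-((1 / 2 : ℝ) • (B * Vf))) ((1 / 2 : ℝ) • B)) :
    ∀ (f g : Fin (N + 1) → ℝ) (ff gf : Fin 2 → ℝ),
      (W⁻¹ * (Matrix.fromRows (1 : Matrix (Fin (N + 1)) (Fin (N + 1)) ℝ) Vf)ᵀ
          * Matrix.diagonal (Sum.elim f ff) * QN) *ᵥ Sum.elim g gf
        = (Matrix.diagonal f * D) *ᵥ g
          + (1 / 2 : ℝ) • ((Matrix.diagonal f * W⁻¹ * Vfᵀ * B) *ᵥ (gf - Vf *ᵥ g))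
          + (1 / 2 : ℝ) • ((W⁻¹ * Vfᵀ * B * Matrix.diagonal ff) *ᵥ (gf - Vf *ᵥ g)) := by
  intro f g ff gf
  have hWf : W⁻¹ * diagonal f = diagonal f * W⁻¹ := by
    rw [hW, inv_diagonal]
    exact commute_diagonal _ _
  have hBff : diagonal ff * B = B * diagonal ff := by
    rw [hB]
    exact commute_diagonal _ _
  have hQN' : QN = decoupledSBP (1 / 2) Q Vf B := hQN
  rw [hQN', Matrix.mul_assoc W⁻¹, transpose_fromRows_one_mul_diagonal_sumElim, Matrix.mul_assoc,
    ← mulVec_mulVec, fromCols_mul_decoupledSBP_mulVec, hD]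
  simp only [mulVec_add, mulVec_smul, mulVec_mulVec, add_mulVec, smul_add, ← Matrix.mul_assoc,
    hWf, Matrix.mul_assoc _ (diagonal ff) B, hBff]
  abel

/-- The "strong form" rewriting of the decoupled SBP approximation: for any nodal values
`f, g` and face values `f_f, g_f`,
`W⁻¹ [I; V_f]ᵀ diag(f_N) Q_N g_N
  = diag(f) D g + (1/2) diag(f) W⁻¹ Vfᵀ B (g_f - V_f g) + (1/2) W⁻¹ Vfᵀ B diag(f_f) (g_f - V_f g)`. -/
theorem decoupled_sbp_strong_form
    (N : ℕ) (w : Fin (N + 1) → ℝ) (hw : ∀ i, w i ≠ 0)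
    (W Q D : Matrix (Fin (N + 1)) (Fin (N + 1)) ℝ)
    (hW : W = Matrix.diagonal w)
    (hD : D = W⁻¹ * Q)
    (Vf : Matrix (Fin 2) (Fin (N + 1)) ℝ)
    (B : Matrix (Fin 2) (Fin 2) ℝ)
    (hB : B = Matrix.diagonal ![(-1 : ℝ), 1])
    (QN : Matrix (Fin (N + 1) ⊕ Fin 2) (Fin (N + 1) ⊕ Fin 2) ℝ)
    (hQN : QN = Matrix.fromBlocks
      (Q - (1 / 2 : ℝ) • (Vfᵀ * B * Vf)) ((1 / 2 : ℝ) • (Vfᵀ * B))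
      (-((1 / 2 : ℝ) • (B * Vf))) ((1 / 2 : ℝ) • B)) :
    ∀ (f g : Fin (N + 1) → ℝ) (ff gf : Fin 2 → ℝ),
      (W⁻¹ * (Matrix.fromRows (1 : Matrix (Fin (N + 1)) (Fin (N + 1)) ℝ) Vf)ᵀ
          * Matrix.diagonal (Sum.elim f ff) * QN) *ᵥ Sum.elim g gf
        = (Matrix.diagonal f * D) *ᵥ g
          + (1 / 2 : ℝ) • ((Matrix.diagonal f * W⁻¹ * Vfᵀ * B) *ᵥ (gf - Vf *ᵥ g))
          + (1 / 2 : ℝ) • ((W⁻¹ * Vfᵀ * B * Matrix.diagonal ff) *ᵥ (gf - Vf *ᵥ g)) :=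
  decoupled_sbp_strong_form_general N w W Q D hW hD Vf B hB QN hQN
end

section
/- Let n, m ≥ 1, let S ∈ ℝ^{n×n} be skew-symmetric (Sᵀ = -S), let v_1,…,v_n ∈ ℝ^m, ψ_1,…,ψ_n ∈ ℝ, and let F_{ij} ∈ ℝ^m for 1 ≤ i,j ≤ n satisfy the Tadmor shuffle condition ⟨v_i - v_j, F_{ij}⟩ = ψ_i - ψ_j for all i,j. Then Σ_{i,j} S_{ij} ⟨v_i, F_{ij}⟩ - Σ_{i,j} S_{ij} ⟨v_j, F_{ij}⟩ = 2 Σ_i ψ_i (Σ_j S_{ij}). In particular, if every row of S sums to zero, then Σ_{i,j} S_{ij} ⟨v_i - v_j, F_{ij}⟩ = 0. -/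
open Matrix BigOperators

/-- **Key flux-differencing identity.** If `S` is skew-symmetric and the `F i j` satisfy the
Tadmor shuffle condition `⟨v i - v j, F i j⟩ = ψ i - ψ j`, then
`Σ_{i,j} S i j ⟨v i, F i j⟩ - Σ_{i,j} S i j ⟨v j, F i j⟩ = 2 Σ_i ψ i (Σ_j S i j)`;
in particular, if every row of `S` sums to zero, then
`Σ_{i,j} S i j ⟨v i - v j, F i j⟩ = 0`. -/
theorem skew_symmetric_flux_differencing
    (n m : ℕ) (hn : 1 ≤ n) (hm : 1 ≤ m)
    (S : Matrix (Fin n) (Fin n) ℝ) (hS : Sᵀ = -S)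
    (v : Fin n → Fin m → ℝ) (ψ : Fin n → ℝ)
    (F : Fin n → Fin n → Fin m → ℝ)
    (hshuffle : ∀ i j, (v i - v j) ⬝ᵥ F i j = ψ i - ψ j) :
    ((∑ i, ∑ j, S i j * (v i ⬝ᵥ F i j)) - ∑ i, ∑ j, S i j * (v j ⬝ᵥ F i j)
        = 2 * ∑ i, ψ i * ∑ j, S i j)
    ∧ ((∀ i, ∑ j, S i j = 0) →
        ∑ i, ∑ j, S i j * ((v i - v j) ⬝ᵥ F i j) = 0) := by
  have hsub : ∀ i j, v i ⬝ᵥ F i j - v j ⬝ᵥ F i j = ψ i - ψ j := by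
    intro i j
    have := hshuffle i j
    rwa [sub_dotProduct] at this
  have key : (∑ i, ∑ j, S i j * (v i ⬝ᵥ F i j)) - ∑ i, ∑ j, S i j * (v j ⬝ᵥ F i j)
      = 2 * ∑ i, ψ i * ∑ j, S i j := by
    have h1 : (∑ i, ∑ j, S i j * (v i ⬝ᵥ F i j)) - ∑ i, ∑ j, S i j * (v j ⬝ᵥ F i j)
        = ∑ i, ∑ j, S i j * (ψ i - ψ j) := by
      rw [← Finset.sum_sub_distrib]
      congr 1; ext i
      rw [← Finset.sum_sub_distrib]
      congr 1; ext j
      rw [← mul_sub, hsub]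
    rw [h1]
    have hskew : ∀ i j, S j i = - S i j := by
      intro i j
      have := congrFun (congrFun hS i) j
      simpa [Matrix.transpose_apply] using this
    have h2 : ∑ i, ∑ j, S i j * (ψ i - ψ j)
        = (∑ i, ∑ j, S i j * ψ i) - ∑ i, ∑ j, S i j * ψ j := by
      simp [mul_sub, Finset.sum_sub_distrib]
    have h3 : (∑ i, ∑ j, S i j * ψ j) = - ∑ i, ∑ j, S i j * ψ i := by
      rw [Finset.sum_comm, ← Finset.sum_neg_distrib]
      congr 1; ext i
      rw [← Finset.sum_neg_distrib]
      congr 1; ext j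
      rw [hskew]; ring
    rw [h2, h3, sub_neg_eq_add, two_mul]
    have : ∀ i, ψ i * ∑ j, S i j = ∑ j, S i j * ψ i := by
      intro i; rw [Finset.mul_sum]; congr 1; ext j; ring
    simp_rw [this]
  refine ⟨key, fun hrow => ?_⟩
  have : ∑ i, ∑ j, S i j * ((v i - v j) ⬝ᵥ F i j)
      = (∑ i, ∑ j, S i j * (v i ⬝ᵥ F i j)) - ∑ i, ∑ j, S i j * (v j ⬝ᵥ F i j) := by
    rw [← Finset.sum_sub_distrib]
    congr 1; ext i
    rw [← Finset.sum_sub_distrib]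
    congr 1; ext j
    rw [sub_dotProduct]; ring
  rw [this, key]
  simp [hrow]
end

section
/- Assume: (i) the SBP property Q + Qᵀ = V_fᵀ B V_f, (ii) Q 1 = 0 and t_Lᵀ1 = t_Rᵀ1 = 1, and (iii) the entropy setup with f_S symmetric, consistent, and entropy conservative, and v a bijection with inverse u(·). Let Q_h = S_h + (1/2)B_h, where, with blocks ordered as (element-1 volume nodes, element-1 face nodes, element-2 volume nodes, element-2 face nodes), S_h = [[S, (1/2)V_fᵀB, 0, 0],[-(1/2)BV_f, 0, 0, (1/2)e_R e_Lᵀ],[0, 0, S, (1/2)V_fᵀB],[0, -(1/2)e_L e_Rᵀ, -(1/2)BV_f, 0]] and B_h = blockdiag(0_{N+1}, -e_L e_Lᵀ, 0_{N+1}, e_R e_Rᵀ), and let I_h = blockdiag([I_{N+1}; V_f],[I_{N+1}; V_f]) and W_h = blockdiag(W, W). Suppose u_h(t) = (u¹(t), u²(t)) ∈ ((ℝ^m)^{N+1})² is differentiable in t and satisfies, componentwise, W_h (d u_h/dt) + 2 I_hᵀ (Q_h ∘ F_S) 1 = 0, where ṽ ∈ (ℝ^m)^{2(N+3)} is obtained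 by applying I_h to each of the m components of (v(u¹_1),…,v(u¹_{N+1}), v(u²_1),…,v(u²_{N+1})) (so ṽ consists of the nodal entropy variables together with their interpolated face values), ũ_i := u(ṽ_i) are the entropy-projected conservative variables, and ((Q_h ∘ F_S) 1)_i := Σ_j (Q_h)_{ij} f_S(ũ_i, ũ_j). Then u_h satisfies the semi-discrete conservation of entropy: d/dt [ Σ_{k=1,2} Σ_{i=1}^{N+1} w_i S(u^k_i(t)) ] + ( v_R·f(ũ_R) - ψ(ũ_R) ) - ( v_L·f(ũ_L) - ψ(ũ_L) ) = 0 for all t, where v_L = Σ_j (t_L)_j v(u¹_j), v_R = Σ_j (t_R)_j v(u²_j), ũ_L = u(v_L), and ũ_R = u(v_R). -/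
/-!
By the chain rule the entropy rate is `Σ_k w_k v(u_k) · du_k/dt`, and the scheme together with
`ṽ = I_h v` turns it into `-2 Σ_a ṽ_a · Σ_b (Q_h)_ab f_S(ũ_a, ũ_b)`. Since `ũ` is the entropy
projection, `ṽ_a = v(ũ_a)`. The decoupled operator inherits the SBP structure of `Q`: `S_h` is
skew-symmetric, so `Q_h + Q_hᵀ = B_h`, and the rows of `Q_h` sum to zero. Symmetrising the double
sum, entropy conservation of `f_S` makes the skew part a difference `ψ(ũ_a) - ψ(ũ_b)`, which the
zero row sums annihilate; what remains is a sum against `B_h`, i.e. the two outer faces, where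
`f_S(ũ, ũ) = f(ũ)`.
-/

open Matrix

section FluxDifferencing

variable {ι R : Type*} [Fintype ι] [CommRing R]

theorem two_mul_sum_mul_eq_sum_boundary (Q B : Matrix ι ι R) (T : ι → ι → R) (g : ι → R)
    (hrow : Q *ᵥ (fun _ => 1) = 0) (hsbp : Q + Qᵀ = B)
    (hT : ∀ a b, T a b - T b a = g a - g b) :
    2 * ∑ a, ∑ b, Q a b * T a b = ∑ a, ∑ b, B a b * (T a b - g b) := by
  have hrow' : ∀ a, ∑ b, Q a b = 0 := fun a => by
    simpa [mulVec, dotProduct] using congrFun hrow a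
  have hB : ∀ a b, B a b = Q a b + Q b a := fun a b => by
    rw [← hsbp]
    rfl
  have hswapT : ∑ a, ∑ b, Q b a * T b a = ∑ a, ∑ b, Q a b * T a b := Finset.sum_comm
  have hswapg : ∑ a, ∑ b, Q b a * g a = ∑ a, ∑ b, Q a b * g b := Finset.sum_comm
  have hrowg : ∑ a, ∑ b, Q b a * g b = 0 := by
    rw [Finset.sum_comm]
    exact Finset.sum_eq_zero fun b _ => by rw [← Finset.sum_mul, hrow', zero_mul]
  calc 2 * ∑ a, ∑ b, Q a b * T a b
      = ∑ a, ∑ b, (Q a b * T a b + Q b a * T b a + Q b a * g a - Q a b * g b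
          - 2 * (Q b a * g b)) := by
        simp only [Finset.sum_sub_distrib, Finset.sum_add_distrib, ← Finset.mul_sum,
          hswapT, hswapg, hrowg]
        ring
    _ = ∑ a, ∑ b, B a b * (T a b - g b) := by
        refine Finset.sum_congr rfl fun a _ => Finset.sum_congr rfl fun b _ => ?_
        rw [hB]
        linear_combination -Q b a * hT a b

theorem two_mul_sum_dotProduct_flux_eq_sum_boundary {κ 𝒰 : Type*} [Fintype κ]
    (Q B : Matrix ι ι R) (hrow : Q *ᵥ (fun _ => 1) = 0) (hsbp : Q + Qᵀ = B)
    {v : 𝒰 → κ → R} {ψ : 𝒰 → R} {fS : 𝒰 → 𝒰 → κ → R} (hsym : ∀ a b, fS a b = fS b a)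
    (hec : ∀ a b, (v a - v b) ⬝ᵥ fS a b = ψ a - ψ b) (u : ι → 𝒰) :
    2 * ∑ a, v (u a) ⬝ᵥ ∑ b, Q a b • fS (u a) (u b)
      = ∑ a, ∑ b, B a b * (v (u a) ⬝ᵥ fS (u a) (u b) - ψ (u b)) := by
  refine (congrArg _ ?_).trans
    (two_mul_sum_mul_eq_sum_boundary Q B _ (fun a => ψ (u a)) hrow hsbp fun a b => ?_)
  · simp only [dotProduct_sum, dotProduct_smul, smul_eq_mul]
  · rw [hsym (u b), ← sub_dotProduct, hec]

end FluxDifferencing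

theorem sum_dotProduct_transpose_mul {α κ ι R : Type*} [Fintype α] [Fintype κ] [Fintype ι]
    [CommSemiring R] (I : Matrix α κ R) (x : Matrix κ ι R) (F : Matrix α ι R) :
    ∑ k, x k ⬝ᵥ (Iᵀ * F) k = ∑ a, (I * x) a ⬝ᵥ F a := by
  simp only [dotProduct, mul_apply, transpose_apply, Finset.mul_sum, Finset.sum_mul]
  calc ∑ k, ∑ c, ∑ a, x k c * (I a k * F a c)
      = ∑ k, ∑ a, ∑ c, I a k * x k c * F a c := by
        refine Finset.sum_congr rfl fun k _ => ?_
        rw [Finset.sum_comm]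
        simp only [mul_left_comm, mul_assoc]
    _ = ∑ a, ∑ c, ∑ k, I a k * x k c * F a c := by
        rw [Finset.sum_comm]
        exact Finset.sum_congr rfl fun a _ => Finset.sum_comm

section EntropyRate

variable {ι : Type*} [Fintype ι]

theorem HasFDerivAt.comp_hasDerivAt_of_gradient {S : (ι → ℝ) → ℝ} {g u' : ι → ℝ}
    {u : ℝ → ι → ℝ} {t : ℝ}
    (hS : HasFDerivAt S (∑ c, g c • (ContinuousLinearMap.proj c : (ι → ℝ) →L[ℝ] ℝ)) (u t))
    (hu : HasDerivAt u u' t) : HasDerivAt (fun s => S (u s)) (g ⬝ᵥ u') t := by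
  refine (hS.comp_hasDerivAt t hu).congr_deriv ?_
  simp [dotProduct]

theorem hasDerivAt_weighted_entropy_of_semidiscrete {κ α : Type*} [Fintype κ] [Fintype α]
    {Sfun : (ι → ℝ) → ℝ} {v : (ι → ℝ) → ι → ℝ}
    (hgrad : ∀ y,
      HasFDerivAt Sfun (∑ c, v y c • (ContinuousLinearMap.proj c : (ι → ℝ) →L[ℝ] ℝ)) y)
    (W : κ → ℝ) (I : Matrix α κ ℝ) (F : Matrix α ι ℝ) (U : ℝ → κ → ι → ℝ) (t : ℝ)
    (hU : ∀ k c, DifferentiableAt ℝ (fun s => U s k c) t)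
    (hform : ∀ k c, W k * deriv (fun s => U s k c) t + 2 * ∑ a, I a k * F a c = 0) :
    HasDerivAt (fun s => ∑ k, W k * Sfun (U s k))
      (-(2 * ∑ a, (I * of fun k => v (U t k)) a ⬝ᵥ F a)) t := by
  have hchain : ∀ k, HasDerivAt (fun s => Sfun (U s k))
      (v (U t k) ⬝ᵥ fun c => deriv (fun s => U s k c) t) t := fun k =>
    (hgrad _).comp_hasDerivAt_of_gradient (hasDerivAt_pi.2 fun c => (hU k c).hasDerivAt)
  have hrate : ∀ k, W k • (fun c => deriv (fun s => U s k c) t) = -(2 : ℝ) • (Iᵀ * F) k :=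
    fun k => funext fun c => by
      simp only [Pi.smul_apply, smul_eq_mul, mul_apply, transpose_apply]
      linarith [hform k c]
  refine (HasDerivAt.fun_sum fun k _ => (hchain k).const_mul (W k)).congr_deriv ?_
  calc ∑ k, W k * (v (U t k) ⬝ᵥ fun c => deriv (fun s => U s k c) t)
      = ∑ k, v (U t k) ⬝ᵥ (-(2 : ℝ) • (Iᵀ * F) k) := by
        simp only [← hrate, dotProduct_smul, smul_eq_mul]
    _ = -(2 * ∑ a, (I * of fun k => v (U t k)) a ⬝ᵥ F a) := by
        rw [← sum_dotProduct_transpose_mul, Finset.mul_sum, ← Finset.sum_neg_distrib]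
        simp only [dotProduct_smul, smul_eq_mul, neg_mul]
        rfl

end EntropyRate

section SkewSplitting

variable {m : Type*}

theorem transpose_sub_half_smul_eq_neg {Q M : Matrix m m ℝ} (hQ : Q + Qᵀ = M) :
    (Q - (1 / 2 : ℝ) • M)ᵀ = -(Q - (1 / 2 : ℝ) • M) := by
  rw [← hQ]
  simp only [transpose_sub, transpose_smul, transpose_add, transpose_transpose]
  module

theorem add_transpose_of_skew_add_half {A C : Matrix m m ℝ} (hA : Aᵀ = -A) (hC : Cᵀ = C) :
    (A + (1 / 2 : ℝ) • C) + (A + (1 / 2 : ℝ) • C)ᵀ = C := by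
  rw [transpose_add, transpose_smul, hA, hC]
  module

end SkewSplitting

noncomputable section DecoupledOperators

variable {n : Type*}

def elementSkew (S : Matrix n n ℝ) (Vf : Matrix (Fin 2) n ℝ) (B : Matrix (Fin 2) (Fin 2) ℝ) :
    Matrix (n ⊕ Fin 2) (n ⊕ Fin 2) ℝ :=
  fromBlocks S ((1 / 2 : ℝ) • (Vfᵀ * B)) (-((1 / 2 : ℝ) • (B * Vf))) 0

def decoupledSkew (S : Matrix n n ℝ) (Vf : Matrix (Fin 2) n ℝ) (B : Matrix (Fin 2) (Fin 2) ℝ)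
    (eL eR : Fin 2 → ℝ) : Matrix ((n ⊕ Fin 2) ⊕ (n ⊕ Fin 2)) ((n ⊕ Fin 2) ⊕ (n ⊕ Fin 2)) ℝ :=
  fromBlocks (elementSkew S Vf B)
    (fromBlocks 0 0 0 ((1 / 2 : ℝ) • vecMulVec eR eL))
    (fromBlocks 0 0 0 (-((1 / 2 : ℝ) • vecMulVec eL eR)))
    (elementSkew S Vf B)

def decoupledBoundary (eL eR : Fin 2 → ℝ) :
    Matrix ((n ⊕ Fin 2) ⊕ (n ⊕ Fin 2)) ((n ⊕ Fin 2) ⊕ (n ⊕ Fin 2)) ℝ :=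
  fromBlocks (fromBlocks 0 0 0 (-(vecMulVec eL eL))) 0 0 (fromBlocks 0 0 0 (vecMulVec eR eR))

def decoupledOperator (Q : Matrix n n ℝ) (Vf : Matrix (Fin 2) n ℝ)
    (B : Matrix (Fin 2) (Fin 2) ℝ) (eL eR : Fin 2 → ℝ) :
    Matrix ((n ⊕ Fin 2) ⊕ (n ⊕ Fin 2)) ((n ⊕ Fin 2) ⊕ (n ⊕ Fin 2)) ℝ :=
  decoupledSkew (Q - (1 / 2 : ℝ) • (Vfᵀ * B * Vf)) Vf B eL eR
    + (1 / 2 : ℝ) • decoupledBoundary eL eR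

theorem transpose_elementSkew {S : Matrix n n ℝ} {B : Matrix (Fin 2) (Fin 2) ℝ}
    (hS : Sᵀ = -S) (hB : Bᵀ = B) (Vf : Matrix (Fin 2) n ℝ) :
    (elementSkew S Vf B)ᵀ = -elementSkew S Vf B := by
  simp [elementSkew, fromBlocks_transpose, fromBlocks_neg, transpose_mul, hS, hB]

theorem transpose_decoupledSkew {S : Matrix n n ℝ} {B : Matrix (Fin 2) (Fin 2) ℝ}
    (hS : Sᵀ = -S) (hB : Bᵀ = B) (Vf : Matrix (Fin 2) n ℝ) (eL eR : Fin 2 → ℝ) :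
    (decoupledSkew S Vf B eL eR)ᵀ = -decoupledSkew S Vf B eL eR := by
  simp [decoupledSkew, fromBlocks_transpose, fromBlocks_neg, transpose_elementSkew hS hB,
    transpose_vecMulVec]

theorem transpose_decoupledBoundary (eL eR : Fin 2 → ℝ) :
    (decoupledBoundary eL eR : Matrix ((n ⊕ Fin 2) ⊕ (n ⊕ Fin 2)) _ ℝ)ᵀ
      = decoupledBoundary eL eR := by
  simp [decoupledBoundary, fromBlocks_transpose, transpose_vecMulVec]

theorem decoupledOperator_add_transpose {Q : Matrix n n ℝ} {Vf : Matrix (Fin 2) n ℝ}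
    {B : Matrix (Fin 2) (Fin 2) ℝ} (hSBP : Q + Qᵀ = Vfᵀ * B * Vf) (hB : Bᵀ = B)
    (eL eR : Fin 2 → ℝ) :
    decoupledOperator Q Vf B eL eR + (decoupledOperator Q Vf B eL eR)ᵀ
      = decoupledBoundary eL eR :=
  add_transpose_of_skew_add_half
    (transpose_decoupledSkew (transpose_sub_half_smul_eq_neg hSBP) hB Vf eL eR)
    (transpose_decoupledBoundary eL eR)

variable [Fintype n]

theorem sub_half_smul_mulVec_one {Q : Matrix n n ℝ} {Vf : Matrix (Fin 2) n ℝ}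
    (hQ1 : Q *ᵥ (fun _ => 1) = 0) (hVf1 : Vf *ᵥ (fun _ => 1) = fun _ => 1)
    (B : Matrix (Fin 2) (Fin 2) ℝ) :
    (Q - (1 / 2 : ℝ) • (Vfᵀ * B * Vf)) *ᵥ (fun _ => 1)
      = -((1 / 2 : ℝ) • (Vfᵀ * B)) *ᵥ (fun _ => 1) := by
  rw [sub_mulVec, smul_mulVec, ← mulVec_mulVec, hVf1, hQ1, neg_mulVec, smul_mulVec, zero_sub]

theorem decoupledSkew_add_half_smul_decoupledBoundary_mulVec_one {S : Matrix n n ℝ}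
    {Vf : Matrix (Fin 2) n ℝ}
    (hS1 : S *ᵥ (fun _ => 1) = -((1 / 2 : ℝ) • (Vfᵀ * diagonal ![(-1 : ℝ), 1])) *ᵥ (fun _ => 1))
    (hVf1 : Vf *ᵥ (fun _ => 1) = fun _ => 1) :
    (decoupledSkew S Vf (diagonal ![-1, 1]) ![1, 0] ![0, 1]
      + (1 / 2 : ℝ) • decoupledBoundary ![1, 0] ![0, 1]) *ᵥ (fun _ => 1) = 0 := by
  have hface : (diagonal ![(-1 : ℝ), 1] * Vf) *ᵥ (fun _ => 1) = ![-1, 1] := by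
    rw [← mulVec_mulVec, hVf1]
    ext i
    fin_cases i <;> simp [mulVec, dotProduct]
  ext ((i | i) | (i | i))
  case inl.inl | inr.inl =>
    simp [decoupledSkew, decoupledBoundary, elementSkew, fromBlocks_add, fromBlocks_smul,
      fromBlocks_mulVec, Function.comp_def, hS1, neg_mulVec]
  case inl.inr | inr.inr =>
    fin_cases i <;> simp [decoupledSkew, decoupledBoundary, elementSkew, fromBlocks_add,
      fromBlocks_smul, fromBlocks_mulVec, Function.comp_def, neg_mulVec, smul_mulVec, hface]

theorem decoupledOperator_mulVec_one {Q : Matrix n n ℝ} {Vf : Matrix (Fin 2) n ℝ}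
    (hQ1 : Q *ᵥ (fun _ => 1) = 0) (htL1 : ∑ j, Vf 0 j = 1) (htR1 : ∑ j, Vf 1 j = 1) :
    decoupledOperator Q Vf (diagonal ![-1, 1]) ![1, 0] ![0, 1] *ᵥ (fun _ => 1) = 0 := by
  have hVf1 : Vf *ᵥ (fun _ => 1) = fun _ => 1 := by
    ext i
    fin_cases i <;> simpa [mulVec, dotProduct]
  exact decoupledSkew_add_half_smul_decoupledBoundary_mulVec_one
    (sub_half_smul_mulVec_one hQ1 hVf1 _) hVf1

theorem sum_decoupledBoundary_mul
    (φ : (n ⊕ Fin 2) ⊕ (n ⊕ Fin 2) → (n ⊕ Fin 2) ⊕ (n ⊕ Fin 2) → ℝ) :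
    ∑ a, ∑ b, decoupledBoundary ![1, 0] ![0, 1] a b * φ a b
      = -φ (.inl (.inr 0)) (.inl (.inr 0)) + φ (.inr (.inr 1)) (.inr (.inr 1)) := by
  simp [decoupledBoundary, Fintype.sum_sum_type, Fin.sum_univ_two]

end DecoupledOperators

theorem two_element_decoupled_entropy_conservation_general
    (N m : ℕ)
    (w : Fin (N + 1) → ℝ)
    (Q : Matrix (Fin (N + 1)) (Fin (N + 1)) ℝ)
    (Vf : Matrix (Fin 2) (Fin (N + 1)) ℝ)
    (B : Matrix (Fin 2) (Fin 2) ℝ)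
    (hB : B = Matrix.diagonal ![(-1 : ℝ), 1])
    -- (i) the SBP property
    (hSBP : Q + Qᵀ = Vfᵀ * B * Vf)
    -- (ii) row sums
    (hQ1 : Q *ᵥ (fun _ => (1 : ℝ)) = 0)
    (htL1 : ∑ j, Vf 0 j = 1) (htR1 : ∑ j, Vf 1 j = 1)
    (eL eR : Fin 2 → ℝ) (heL : eL = ![1, 0]) (heR : eR = ![0, 1])
    (S : Matrix (Fin (N + 1)) (Fin (N + 1)) ℝ)
    (hS : S = Q - (1 / 2 : ℝ) • (Vfᵀ * B * Vf))
    -- two-element decoupled matrices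
    (Sh Bh Qh : Matrix ((Fin (N + 1) ⊕ Fin 2) ⊕ (Fin (N + 1) ⊕ Fin 2))
                       ((Fin (N + 1) ⊕ Fin 2) ⊕ (Fin (N + 1) ⊕ Fin 2)) ℝ)
    (hSh : Sh = Matrix.fromBlocks
      (Matrix.fromBlocks S ((1 / 2 : ℝ) • (Vfᵀ * B)) (-((1 / 2 : ℝ) • (B * Vf))) 0)
      (Matrix.fromBlocks 0 0 0 ((1 / 2 : ℝ) • Matrix.vecMulVec eR eL))
      (Matrix.fromBlocks 0 0 0 (-((1 / 2 : ℝ) • Matrix.vecMulVec eL eR)))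
      (Matrix.fromBlocks S ((1 / 2 : ℝ) • (Vfᵀ * B)) (-((1 / 2 : ℝ) • (B * Vf))) 0))
    (hBh : Bh = Matrix.fromBlocks
      (Matrix.fromBlocks 0 0 0 (-(Matrix.vecMulVec eL eL))) 0
      0 (Matrix.fromBlocks 0 0 0 (Matrix.vecMulVec eR eR)))
    (hQh : Qh = Sh + (1 / 2 : ℝ) • Bh)
    (Ih : Matrix ((Fin (N + 1) ⊕ Fin 2) ⊕ (Fin (N + 1) ⊕ Fin 2))
                 (Fin (N + 1) ⊕ Fin (N + 1)) ℝ)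
    (hIh : Ih = Matrix.fromBlocks
      (Matrix.fromRows (1 : Matrix (Fin (N + 1)) (Fin (N + 1)) ℝ) Vf) 0
      0 (Matrix.fromRows (1 : Matrix (Fin (N + 1)) (Fin (N + 1)) ℝ) Vf))
    -- (iii) the entropy setup
    (Sfun : (Fin m → ℝ) → ℝ) (v uu f : (Fin m → ℝ) → Fin m → ℝ)
    (ψ : (Fin m → ℝ) → ℝ) (fS : (Fin m → ℝ) → (Fin m → ℝ) → Fin m → ℝ)
    (hgrad : ∀ y : Fin m → ℝ,
      HasFDerivAt Sfun (∑ c, v y c • (ContinuousLinearMap.proj c : (Fin m → ℝ) →L[ℝ] ℝ)) y)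
    (hvu : Function.RightInverse uu v)
    (hsym : ∀ a b, fS a b = fS b a)
    (hcons : ∀ a, fS a a = f a)
    (hec : ∀ a b, (v a - v b) ⬝ᵥ fS a b = ψ a - ψ b)
    -- the semi-discrete solution and formulation
    (u1 u2 : ℝ → Fin (N + 1) → Fin m → ℝ)
    (hd1 : ∀ i c, Differentiable ℝ (fun t => u1 t i c))
    (hd2 : ∀ i c, Differentiable ℝ (fun t => u2 t i c))
    (vtil util : ℝ → ((Fin (N + 1) ⊕ Fin 2) ⊕ (Fin (N + 1) ⊕ Fin 2)) → Fin m → ℝ)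
    (hvtil : ∀ t k c, vtil t k c
      = ∑ j, Ih k j * Sum.elim (fun i => v (u1 t i)) (fun i => v (u2 t i)) j c)
    (hutil : ∀ t k, util t k = uu (vtil t k))
    (hform : ∀ (t : ℝ) (k : Fin (N + 1) ⊕ Fin (N + 1)) (c : Fin m),
      Sum.elim w w k
          * deriv (fun s => Sum.elim (fun i => u1 s i c) (fun i => u2 s i c) k) t
        + 2 * ∑ a, Ih a k * ∑ b, Qh a b * fS (util t a) (util t b) c = 0) :
    ∀ t : ℝ,
      deriv (fun s => (∑ i, w i * Sfun (u1 s i)) + ∑ i, w i * Sfun (u2 s i)) t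
        + (((fun c => ∑ j, Vf 1 j * v (u2 t j) c)
              ⬝ᵥ f (uu fun c => ∑ j, Vf 1 j * v (u2 t j) c))
            - ψ (uu fun c => ∑ j, Vf 1 j * v (u2 t j) c))
        - (((fun c => ∑ j, Vf 0 j * v (u1 t j) c)
              ⬝ᵥ f (uu fun c => ∑ j, Vf 0 j * v (u1 t j) c))
            - ψ (uu fun c => ∑ j, Vf 0 j * v (u1 t j) c)) = 0 := by
  intro t
  subst hB heL heR
  replace hBh : Bh = decoupledBoundary ![1, 0] ![0, 1] := hBh
  replace hQh : Qh = decoupledOperator Q Vf (diagonal ![-1, 1]) ![1, 0] ![0, 1] := by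
    rw [hQh, hSh, hBh, hS]
    rfl
  have hrate := hasDerivAt_weighted_entropy_of_semidiscrete hgrad (Sum.elim w w) Ih
    (fun a => ∑ b, Qh a b • fS (util t a) (util t b)) (fun s => Sum.elim (u1 s) (u2 s)) t
    (fun k c => by cases k; exacts [hd1 _ c t, hd2 _ c t])
    (fun k c => by
      simp only [Finset.sum_apply, Pi.smul_apply, smul_eq_mul]
      cases k <;> exact hform t _ c)
  have hvu' : ∀ x, v (uu x) = x := hvu
  have hv_interp : ∀ a, (Ih * of fun k => v (Sum.elim (u1 t) (u2 t) k)) a = v (util t a) := by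
    intro a
    ext c
    rw [hutil, hvu', hvtil]
    simp [mul_apply, Fintype.sum_sum_type]
  have hderiv : deriv (fun s => (∑ i, w i * Sfun (u1 s i)) + ∑ i, w i * Sfun (u2 s i)) t
      = -(2 * ∑ a, v (util t a) ⬝ᵥ ∑ b, Qh a b • fS (util t a) (util t b)) := by
    simp only [hv_interp] at hrate
    rw [← hrate.deriv]
    simp only [Fintype.sum_sum_type, Sum.elim_inl, Sum.elim_inr]
  have hsplit := two_mul_sum_dotProduct_flux_eq_sum_boundary Qh Bh
    (hQh ▸ decoupledOperator_mulVec_one hQ1 htL1 htR1)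
    (hQh ▸ hBh ▸ decoupledOperator_add_transpose hSBP (diagonal_transpose _) _ _) hsym hec (util t)
  have hvL : vtil t (.inl (.inr 0)) = fun c => ∑ j, Vf 0 j * v (u1 t j) c :=
    funext fun c => by simp [hvtil, hIh, Fintype.sum_sum_type]
  have hvR : vtil t (.inr (.inr 1)) = fun c => ∑ j, Vf 1 j * v (u2 t j) c :=
    funext fun c => by simp [hvtil, hIh, Fintype.sum_sum_type]
  rw [hBh, sum_decoupledBoundary_mul] at hsplit
  simp only [hutil, hvu', hcons, hvL, hvR] at hsplit hderiv
  linarith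

/-- **Semi-discrete entropy conservation for the two-element decoupled (Gauss collocation)
scheme.** If `u_h = (u¹, u²)` solves `W_h du_h/dt + 2 I_hᵀ (Q_h ∘ F_S) 1 = 0`, where `F_S` is
built from a symmetric, consistent, entropy conservative two-point flux evaluated at the
entropy-projected conservative variables `ũ`, then the total entropy satisfies
`d/dt Σ w S(u) + (v_R·f(ũ_R) - ψ(ũ_R)) - (v_L·f(ũ_L) - ψ(ũ_L)) = 0`. -/
theorem two_element_decoupled_entropy_conservation
    (N m : ℕ) (hm : 1 ≤ m)
    (w : Fin (N + 1) → ℝ)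
    (Q : Matrix (Fin (N + 1)) (Fin (N + 1)) ℝ)
    (Vf : Matrix (Fin 2) (Fin (N + 1)) ℝ)
    (B : Matrix (Fin 2) (Fin 2) ℝ)
    (hB : B = Matrix.diagonal ![(-1 : ℝ), 1])
    -- (i) the SBP property
    (hSBP : Q + Qᵀ = Vfᵀ * B * Vf)
    -- (ii) row sums
    (hQ1 : Q *ᵥ (fun _ => (1 : ℝ)) = 0)
    (htL1 : ∑ j, Vf 0 j = 1) (htR1 : ∑ j, Vf 1 j = 1)
    (eL eR : Fin 2 → ℝ) (heL : eL = ![1, 0]) (heR : eR = ![0, 1])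
    (S : Matrix (Fin (N + 1)) (Fin (N + 1)) ℝ)
    (hS : S = Q - (1 / 2 : ℝ) • (Vfᵀ * B * Vf))
    -- two-element decoupled matrices
    (Sh Bh Qh : Matrix ((Fin (N + 1) ⊕ Fin 2) ⊕ (Fin (N + 1) ⊕ Fin 2))
                       ((Fin (N + 1) ⊕ Fin 2) ⊕ (Fin (N + 1) ⊕ Fin 2)) ℝ)
    (hSh : Sh = Matrix.fromBlocks
      (Matrix.fromBlocks S ((1 / 2 : ℝ) • (Vfᵀ * B)) (-((1 / 2 : ℝ) • (B * Vf))) 0)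
      (Matrix.fromBlocks 0 0 0 ((1 / 2 : ℝ) • Matrix.vecMulVec eR eL))
      (Matrix.fromBlocks 0 0 0 (-((1 / 2 : ℝ) • Matrix.vecMulVec eL eR)))
      (Matrix.fromBlocks S ((1 / 2 : ℝ) • (Vfᵀ * B)) (-((1 / 2 : ℝ) • (B * Vf))) 0))
    (hBh : Bh = Matrix.fromBlocks
      (Matrix.fromBlocks 0 0 0 (-(Matrix.vecMulVec eL eL))) 0
      0 (Matrix.fromBlocks 0 0 0 (Matrix.vecMulVec eR eR)))
    (hQh : Qh = Sh + (1 / 2 : ℝ) • Bh)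
    (Ih : Matrix ((Fin (N + 1) ⊕ Fin 2) ⊕ (Fin (N + 1) ⊕ Fin 2))
                 (Fin (N + 1) ⊕ Fin (N + 1)) ℝ)
    (hIh : Ih = Matrix.fromBlocks
      (Matrix.fromRows (1 : Matrix (Fin (N + 1)) (Fin (N + 1)) ℝ) Vf) 0
      0 (Matrix.fromRows (1 : Matrix (Fin (N + 1)) (Fin (N + 1)) ℝ) Vf))
    -- (iii) the entropy setup
    (Sfun : (Fin m → ℝ) → ℝ) (v uu f : (Fin m → ℝ) → Fin m → ℝ)
    (ψ : (Fin m → ℝ) → ℝ) (fS : (Fin m → ℝ) → (Fin m → ℝ) → Fin m → ℝ)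
    (hgrad : ∀ y : Fin m → ℝ,
      HasFDerivAt Sfun (∑ c, v y c • (ContinuousLinearMap.proj c : (Fin m → ℝ) →L[ℝ] ℝ)) y)
    (huv : Function.LeftInverse uu v) (hvu : Function.RightInverse uu v)
    (hsym : ∀ a b, fS a b = fS b a)
    (hcons : ∀ a, fS a a = f a)
    (hec : ∀ a b, (v a - v b) ⬝ᵥ fS a b = ψ a - ψ b)
    -- the semi-discrete solution and formulation
    (u1 u2 : ℝ → Fin (N + 1) → Fin m → ℝ)
    (hd1 : ∀ i c, Differentiable ℝ (fun t => u1 t i c))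
    (hd2 : ∀ i c, Differentiable ℝ (fun t => u2 t i c))
    (vtil util : ℝ → ((Fin (N + 1) ⊕ Fin 2) ⊕ (Fin (N + 1) ⊕ Fin 2)) → Fin m → ℝ)
    (hvtil : ∀ t k c, vtil t k c
      = ∑ j, Ih k j * Sum.elim (fun i => v (u1 t i)) (fun i => v (u2 t i)) j c)
    (hutil : ∀ t k, util t k = uu (vtil t k))
    (hform : ∀ (t : ℝ) (k : Fin (N + 1) ⊕ Fin (N + 1)) (c : Fin m),
      Sum.elim w w k
          * deriv (fun s => Sum.elim (fun i => u1 s i c) (fun i => u2 s i c) k) t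
        + 2 * ∑ a, Ih a k * ∑ b, Qh a b * fS (util t a) (util t b) c = 0) :
    ∀ t : ℝ,
      deriv (fun s => (∑ i, w i * Sfun (u1 s i)) + ∑ i, w i * Sfun (u2 s i)) t
        + (((fun c => ∑ j, Vf 1 j * v (u2 t j) c)
              ⬝ᵥ f (uu fun c => ∑ j, Vf 1 j * v (u2 t j) c))
            - ψ (uu fun c => ∑ j, Vf 1 j * v (u2 t j) c))
        - (((fun c => ∑ j, Vf 0 j * v (u1 t j) c)
              ⬝ᵥ f (uu fun c => ∑ j, Vf 0 j * v (u1 t j) c))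
            - ψ (uu fun c => ∑ j, Vf 0 j * v (u1 t j) c)) = 0 :=
  two_element_decoupled_entropy_conservation_general N m w Q Vf B hB hSBP hQ1 htL1 htR1 eL eR heL
    heR S hS Sh Bh Qh hSh hBh hQh Ih hIh Sfun v uu f ψ fS hgrad hvu hsym hcons hec u1 u2 hd1 hd2
    vtil util hvtil hutil hform
end

section
/- Assume: (i) the SBP property Q + Qᵀ = V_fᵀ B V_f, (ii) Q 1 = 0 and t_Lᵀ1 = t_Rᵀ1 = 1, and (iii) the entropy setup with f_S symmetric and entropy conservative. Define the 2(N+1)×2(N+1) coupled matrices Q_h = [[S, (1/2)t_R t_Lᵀ],[-(1/2)t_L t_Rᵀ, S]] + (1/2)·blockdiag(-t_L t_Lᵀ, t_R t_Rᵀ), B_h = blockdiag(-t_L t_Lᵀ, t_R t_Rᵀ), and W_h = blockdiag(W, W) with diagonal entries w̃_1,…,w̃_{2(N+1)}. Suppose u_h(t) ∈ (ℝ^m)^{2(N+1)} is differentiable in t and satisfies, componentwise, W_h (d u_h/dt) + 2 (Q_h ∘ F_S) 1 = 0, where ((Q_h ∘ F_S)1)_i := Σ_j (Q_h)_{ij}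 f_S((u_h)_i, (u_h)_j). Then u_h satisfies the semi-discrete entropy conservation identity d/dt [ Σ_i w̃_i S((u_h)_i(t)) ] + Σ_{i,j} (B_h)_{ij} v((u_h)_i)·f_S((u_h)_i,(u_h)_j) - Σ_{i,j} (B_h)_{ij} ψ((u_h)_j) = 0 for all t. -/
open Matrix

/-!
Write `F_kj = f_S(u_k, u_j)` and let `A = Q_h`. The scheme turns `d/dt Σ w̃_k S(u_k)` into
`-2 Σ_kj A_kj v(u_k)·F_kj`. Since `F` is symmetric, swapping `k, j` gives
`2 Σ A_kj v_k·F_kj = Σ A_kj (v_k - v_j)·F_kj + Σ (A + Aᵀ)_kj v_j·F_kj`,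
and entropy conservation of `f_S` replaces `(v_k - v_j)·F_kj` by `ψ_k - ψ_j`. Thus only the
two SBP properties of the coupled operator enter: `Q_h + Q_hᵀ = B_h` and `Q_h 1 = 0`, which
kill the volume terms and leave exactly the boundary terms with `B_h`.
-/

section FluxDifferencing

variable {ι R : Type*} [Fintype ι] [CommRing R]

theorem sum_sum_mul_sub_of_add_transpose_eq {A Bm : Matrix ι ι R} (hA : A + Aᵀ = Bm)
    (hA1 : A *ᵥ 1 = 0) (p : ι → R) :
    ∑ k, ∑ j, A k j * (p k - p j) = -∑ k, ∑ j, Bm k j * p j := by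
  have hrow : ∀ k, ∑ j, A k j = 0 := fun k => by
    simpa [mulVec, dotProduct] using congrFun hA1 k
  have hBp : ∑ k, ∑ j, Bm k j * p j = ∑ k, ∑ j, A k j * p j := by
    simp only [← hA, Matrix.add_apply, transpose_apply, add_mul, Finset.sum_add_distrib]
    rw [Finset.sum_comm (f := fun k j => A j k * p j)]
    simp [← Finset.sum_mul, hrow]
  rw [hBp]
  simp [mul_sub, Finset.sum_sub_distrib, ← Finset.sum_mul, hrow]

variable {n : Type*} [Fintype n]

theorem two_mul_sum_flux_differencing_eq {A Bm : Matrix ι ι R} (hA : A + Aᵀ = Bm)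
    (hA1 : A *ᵥ 1 = 0) (x : ι → n → R) (p : ι → R) (F : ι → ι → n → R)
    (hF : ∀ k j, F k j = F j k) (hxF : ∀ k j, (x k - x j) ⬝ᵥ F k j = p k - p j) :
    2 * ∑ k, ∑ j, A k j * (x k ⬝ᵥ F k j)
      = ∑ k, ∑ j, Bm k j * (x k ⬝ᵥ F k j) - ∑ k, ∑ j, Bm k j * p j := by
  have hBm : ∀ k j, Bm k j = A k j + A j k := fun k j => by simp [← hA]
  have hswap : ∑ k, ∑ j, A k j * (x k ⬝ᵥ F k j) = ∑ k, ∑ j, A j k * (x j ⬝ᵥ F k j) := by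
    rw [Finset.sum_comm]
    simp only [hF]
  have hpoint : ∀ k j, A k j * (x k ⬝ᵥ F k j) + A j k * (x j ⬝ᵥ F k j)
      = A k j * (p k - p j) + Bm k j * (x j ⬝ᵥ F k j) := fun k j => by
    rw [← hxF, hBm, sub_dotProduct]
    ring
  have hBflux : ∑ k, ∑ j, Bm k j * (x j ⬝ᵥ F k j) = ∑ k, ∑ j, Bm k j * (x k ⬝ᵥ F k j) := by
    rw [Finset.sum_comm]
    refine Finset.sum_congr rfl fun k _ => Finset.sum_congr rfl fun j _ => ?_
    rw [hBm j k, hBm k j, add_comm, hF]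
  calc 2 * ∑ k, ∑ j, A k j * (x k ⬝ᵥ F k j)
      = ∑ k, ∑ j, (A k j * (x k ⬝ᵥ F k j) + A j k * (x j ⬝ᵥ F k j)) := by
        rw [two_mul]
        nth_rewrite 2 [hswap]
        simp only [Finset.sum_add_distrib]
    _ = ∑ k, ∑ j, A k j * (p k - p j) + ∑ k, ∑ j, Bm k j * (x j ⬝ᵥ F k j) := by
        simp only [hpoint, Finset.sum_add_distrib]
    _ = ∑ k, ∑ j, Bm k j * (x k ⬝ᵥ F k j) - ∑ k, ∑ j, Bm k j * p j := by
        rw [sum_sum_mul_sub_of_add_transpose_eq hA hA1, hBflux]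
        ring

end FluxDifferencing

section EntropyRate

variable {n : Type*} [Fintype n]

theorem sum_smul_proj_apply (g x : n → ℝ) :
    (∑ c, g c • (ContinuousLinearMap.proj c : (n → ℝ) →L[ℝ] ℝ)) x = g ⬝ᵥ x := by
  simp [dotProduct]

theorem HasDerivAt.comp_of_hasFDerivAt_sum_smul_proj {Sfun : (n → ℝ) → ℝ}
    {v : (n → ℝ) → n → ℝ}
    (hgrad : ∀ y, HasFDerivAt Sfun (∑ c, v y c • (ContinuousLinearMap.proj c : (n → ℝ) →L[ℝ] ℝ)) y)
    {u : ℝ → n → ℝ} {u' : n → ℝ} {t : ℝ} (hu : HasDerivAt u u' t) :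
    HasDerivAt (fun s => Sfun (u s)) (v (u t) ⬝ᵥ u') t := by
  have h := (hgrad (u t)).comp_hasDerivAt t hu
  rw [sum_smul_proj_apply] at h
  exact h

variable {ι : Type*} [Fintype ι]

theorem mul_dotProduct_eq_of_flux_form {a : ℝ} {x y : n → ℝ} {A : ι → ℝ} {G : ι → n → ℝ}
    (h : ∀ c, a * y c + 2 * ∑ j, A j * G j c = 0) :
    a * (x ⬝ᵥ y) = -2 * ∑ j, A j * (x ⬝ᵥ G j) := by
  have hy : a • y = (-2 : ℝ) • ∑ j, A j • G j := by
    ext c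
    simp only [Pi.smul_apply, Finset.sum_apply, smul_eq_mul]
    linarith [h c]
  rw [← smul_eq_mul, ← dotProduct_smul, hy, dotProduct_smul, dotProduct_sum, smul_eq_mul]
  simp only [dotProduct_smul, smul_eq_mul, Finset.mul_sum]

theorem entropy_conservation_of_flux_differencing {A Bm : Matrix ι ι ℝ} (hA : A + Aᵀ = Bm)
    (hA1 : A *ᵥ 1 = 0) (ω : ι → ℝ) {Sfun : (n → ℝ) → ℝ} {v : (n → ℝ) → n → ℝ}
    {ψ : (n → ℝ) → ℝ} {fS : (n → ℝ) → (n → ℝ) → n → ℝ}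
    (hgrad : ∀ y, HasFDerivAt Sfun (∑ c, v y c • (ContinuousLinearMap.proj c : (n → ℝ) →L[ℝ] ℝ)) y)
    (hsym : ∀ a b, fS a b = fS b a) (hec : ∀ a b, (v a - v b) ⬝ᵥ fS a b = ψ a - ψ b)
    {u : ℝ → ι → n → ℝ} (hd : ∀ k c, Differentiable ℝ (fun t => u t k c))
    (hform : ∀ t k c, ω k * deriv (fun s => u s k c) t + 2 * ∑ j, A k j * fS (u t k) (u t j) c = 0)
    (t : ℝ) :
    deriv (fun s => ∑ k, ω k * Sfun (u s k)) t
      + (∑ i, ∑ j, Bm i j * (v (u t i) ⬝ᵥ fS (u t i) (u t j)))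
      - (∑ i, ∑ j, Bm i j * ψ (u t j)) = 0 := by
  have hrate : deriv (fun s => ∑ k, ω k * Sfun (u s k)) t
      = -2 * ∑ k, ∑ j, A k j * (v (u t k) ⬝ᵥ fS (u t k) (u t j)) := by
    have hu : ∀ k, HasDerivAt (fun s => u s k) (fun c => deriv (fun s => u s k c) t) t :=
      fun k => hasDerivAt_pi.2 fun c => (hd k c t).hasDerivAt
    rw [(HasDerivAt.fun_sum fun k _ =>
      ((hu k).comp_of_hasFDerivAt_sum_smul_proj hgrad).const_mul (ω k)).deriv, Finset.mul_sum]
    exact Finset.sum_congr rfl fun k _ => mul_dotProduct_eq_of_flux_form (hform t k)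
  have hflux := two_mul_sum_flux_differencing_eq hA hA1 (fun k => v (u t k))
    (fun k => ψ (u t k)) (fun k j => fS (u t k) (u t j)) (fun k j => hsym _ _) (fun k j => hec _ _)
  rw [hrate]
  linear_combination -hflux

end EntropyRate

theorem transpose_mul_diagonal_neg_one_one_mul {n R : Type*} [CommRing R]
    (V : Matrix (Fin 2) n R) :
    Vᵀ * diagonal ![(-1 : R), 1] * V = vecMulVec (V 1) (V 1) - vecMulVec (V 0) (V 0) := by
  ext i j
  simp [mul_apply, Fin.sum_univ_two, diagonal_apply, vecMulVec_apply]
  ring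

section SBPCoupling

variable {n : Type*}

theorem sub_half_smul_add_transpose_eq_zero {Q M : Matrix n n ℝ}
    (hQ : Q + Qᵀ = M) (hM : Mᵀ = M) :
    (Q - (1 / 2 : ℝ) • M) + (Q - (1 / 2 : ℝ) • M)ᵀ = 0 := by
  rw [transpose_sub, transpose_smul, hM, ← hQ]
  module

/-- The coupled two-element operator `Q_h`. -/
noncomputable def sbpCoupling (S : Matrix n n ℝ) (tL tR : n → ℝ) : Matrix (n ⊕ n) (n ⊕ n) ℝ :=
  fromBlocks S ((1 / 2 : ℝ) • vecMulVec tR tL) (-((1 / 2 : ℝ) • vecMulVec tL tR)) S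
    + (1 / 2 : ℝ) • fromBlocks (-vecMulVec tL tL) 0 0 (vecMulVec tR tR)

theorem sbpCoupling_add_transpose {S : Matrix n n ℝ} (hS : S + Sᵀ = 0) (tL tR : n → ℝ) :
    sbpCoupling S tL tR + (sbpCoupling S tL tR)ᵀ
      = fromBlocks (-vecMulVec tL tL) 0 0 (vecMulVec tR tR) := by
  have hS' : ∀ i j, S i j + S j i = 0 := fun i j => by
    simpa using congrFun (congrFun hS i) j
  ext (i | i) (j | j) <;> simp [sbpCoupling, vecMulVec_apply] <;> linarith [hS' i j]

variable [Fintype n]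

theorem sub_half_smul_vecMulVec_mulVec_one {Q : Matrix n n ℝ} {tL tR : n → ℝ}
    (hQ1 : Q *ᵥ 1 = 0) (htL : tL ⬝ᵥ 1 = 1) (htR : tR ⬝ᵥ 1 = 1) :
    (Q - (1 / 2 : ℝ) • (vecMulVec tR tR - vecMulVec tL tL)) *ᵥ 1 = (1 / 2 : ℝ) • (tL - tR) := by
  rw [sub_mulVec, smul_mulVec, sub_mulVec, vecMulVec_mulVec, vecMulVec_mulVec, hQ1, htL, htR]
  simp only [MulOpposite.op_one, one_smul, zero_sub]
  module

theorem sbpCoupling_mulVec_one {S : Matrix n n ℝ} {tL tR : n → ℝ}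
    (hS : S *ᵥ 1 = (1 / 2 : ℝ) • (tL - tR)) (htL : tL ⬝ᵥ 1 = 1) (htR : tR ⬝ᵥ 1 = 1) :
    sbpCoupling S tL tR *ᵥ 1 = 0 := by
  have hinl : (1 : n ⊕ n → ℝ) ∘ Sum.inl = 1 := rfl
  have hinr : (1 : n ⊕ n → ℝ) ∘ Sum.inr = 1 := rfl
  rw [sbpCoupling, add_mulVec, smul_mulVec, fromBlocks_mulVec, fromBlocks_mulVec, hinl, hinr]
  ext (i | i) <;> simp [smul_mulVec, neg_mulVec, vecMulVec_mulVec, hS, htL, htR] <;> ring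

end SBPCoupling

theorem coupled_two_element_entropy_conservation_general
    (N m : ℕ)
    (w : Fin (N + 1) → ℝ)
    (Q : Matrix (Fin (N + 1)) (Fin (N + 1)) ℝ)
    (Vf : Matrix (Fin 2) (Fin (N + 1)) ℝ)
    (B : Matrix (Fin 2) (Fin 2) ℝ)
    (hB : B = Matrix.diagonal ![(-1 : ℝ), 1])
    -- (i) the SBP property
    (hSBP : Q + Qᵀ = Vfᵀ * B * Vf)
    -- (ii) row sums
    (hQ1 : Q *ᵥ (fun _ => (1 : ℝ)) = 0)
    (htL1 : ∑ j, Vf 0 j = 1) (htR1 : ∑ j, Vf 1 j = 1)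
    (tL tR : Fin (N + 1) → ℝ)
    (htL : ∀ j, tL j = Vf 0 j) (htR : ∀ j, tR j = Vf 1 j)
    (S : Matrix (Fin (N + 1)) (Fin (N + 1)) ℝ)
    (hS : S = Q - (1 / 2 : ℝ) • (Vfᵀ * B * Vf))
    (Qh Bh : Matrix (Fin (N + 1) ⊕ Fin (N + 1)) (Fin (N + 1) ⊕ Fin (N + 1)) ℝ)
    (hQh : Qh = Matrix.fromBlocks
        S ((1 / 2 : ℝ) • Matrix.vecMulVec tR tL)
        (-((1 / 2 : ℝ) • Matrix.vecMulVec tL tR)) S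
      + (1 / 2 : ℝ) • Matrix.fromBlocks (-Matrix.vecMulVec tL tL) 0 0 (Matrix.vecMulVec tR tR))
    (hBh : Bh = Matrix.fromBlocks (-Matrix.vecMulVec tL tL) 0 0 (Matrix.vecMulVec tR tR))
    -- (iii) the entropy setup
    (Sfun : (Fin m → ℝ) → ℝ) (v : (Fin m → ℝ) → Fin m → ℝ)
    (ψ : (Fin m → ℝ) → ℝ) (fS : (Fin m → ℝ) → (Fin m → ℝ) → Fin m → ℝ)
    (hgrad : ∀ y : Fin m → ℝ,
      HasFDerivAt Sfun (∑ c, v y c • (ContinuousLinearMap.proj c : (Fin m → ℝ) →L[ℝ] ℝ)) y)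
    (hsym : ∀ a b, fS a b = fS b a)
    (hec : ∀ a b, (v a - v b) ⬝ᵥ fS a b = ψ a - ψ b)
    -- the semi-discrete solution and formulation
    (uh : ℝ → (Fin (N + 1) ⊕ Fin (N + 1)) → Fin m → ℝ)
    (hd : ∀ k c, Differentiable ℝ (fun t => uh t k c))
    (hform : ∀ (t : ℝ) (k : Fin (N + 1) ⊕ Fin (N + 1)) (c : Fin m),
      Sum.elim w w k * deriv (fun s => uh s k c) t
        + 2 * ∑ j, Qh k j * fS (uh t k) (uh t j) c = 0) :
    ∀ t : ℝ,
      deriv (fun s => ∑ k, Sum.elim w w k * Sfun (uh s k)) t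
        + (∑ i, ∑ j, Bh i j * (v (uh t i) ⬝ᵥ fS (uh t i) (uh t j)))
        - (∑ i, ∑ j, Bh i j * ψ (uh t j)) = 0 := by
  have hBVf : Vfᵀ * B * Vf = vecMulVec tR tR - vecMulVec tL tL := by
    rw [hB, transpose_mul_diagonal_neg_one_one_mul, ← funext htL, ← funext htR]
  have htL1' : tL ⬝ᵥ 1 = 1 := by simpa [dotProduct, htL] using htL1
  have htR1' : tR ⬝ᵥ 1 = 1 := by simpa [dotProduct, htR] using htR1
  rw [hBVf] at hSBP hS
  have hS_skew : S + Sᵀ = 0 :=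
    hS ▸ sub_half_smul_add_transpose_eq_zero hSBP (by simp [transpose_vecMulVec])
  have hS_one : S *ᵥ 1 = (1 / 2 : ℝ) • (tL - tR) :=
    hS ▸ sub_half_smul_vecMulVec_mulVec_one hQ1 htL1' htR1'
  have hQh' : Qh = sbpCoupling S tL tR := hQh
  subst hQh' hBh
  exact entropy_conservation_of_flux_differencing (sbpCoupling_add_transpose hS_skew tL tR)
    (sbpCoupling_mulVec_one hS_one htL1' htR1') (Sum.elim w w) hgrad hsym hec hd hform

/-- **Semi-discrete entropy conservation for the coupled generalized-SBP two-element
scheme.** If `u_h` solves `W_h du_h/dt + 2 (Q_h ∘ F_S) 1 = 0` with a symmetric, entropy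
conservative two-point flux `f_S`, then
`d/dt Σ w̃ S(u_h) + Σ (B_h)_{ij} v(u_i)·f_S(u_i,u_j) - Σ (B_h)_{ij} ψ(u_j) = 0`. -/
theorem coupled_two_element_entropy_conservation
    (N m : ℕ) (hm : 1 ≤ m)
    (w : Fin (N + 1) → ℝ)
    (Q : Matrix (Fin (N + 1)) (Fin (N + 1)) ℝ)
    (Vf : Matrix (Fin 2) (Fin (N + 1)) ℝ)
    (B : Matrix (Fin 2) (Fin 2) ℝ)
    (hB : B = Matrix.diagonal ![(-1 : ℝ), 1])
    -- (i) the SBP property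
    (hSBP : Q + Qᵀ = Vfᵀ * B * Vf)
    -- (ii) row sums
    (hQ1 : Q *ᵥ (fun _ => (1 : ℝ)) = 0)
    (htL1 : ∑ j, Vf 0 j = 1) (htR1 : ∑ j, Vf 1 j = 1)
    (tL tR : Fin (N + 1) → ℝ)
    (htL : ∀ j, tL j = Vf 0 j) (htR : ∀ j, tR j = Vf 1 j)
    (S : Matrix (Fin (N + 1)) (Fin (N + 1)) ℝ)
    (hS : S = Q - (1 / 2 : ℝ) • (Vfᵀ * B * Vf))
    (Qh Bh : Matrix (Fin (N + 1) ⊕ Fin (N + 1)) (Fin (N + 1) ⊕ Fin (N + 1)) ℝ)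
    (hQh : Qh = Matrix.fromBlocks
        S ((1 / 2 : ℝ) • Matrix.vecMulVec tR tL)
        (-((1 / 2 : ℝ) • Matrix.vecMulVec tL tR)) S
      + (1 / 2 : ℝ) • Matrix.fromBlocks (-Matrix.vecMulVec tL tL) 0 0 (Matrix.vecMulVec tR tR))
    (hBh : Bh = Matrix.fromBlocks (-Matrix.vecMulVec tL tL) 0 0 (Matrix.vecMulVec tR tR))
    -- (iii) the entropy setup
    (Sfun : (Fin m → ℝ) → ℝ) (v : (Fin m → ℝ) → Fin m → ℝ)
    (ψ : (Fin m → ℝ) → ℝ) (fS : (Fin m → ℝ) → (Fin m → ℝ) → Fin m → ℝ)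
    (hgrad : ∀ y : Fin m → ℝ,
      HasFDerivAt Sfun (∑ c, v y c • (ContinuousLinearMap.proj c : (Fin m → ℝ) →L[ℝ] ℝ)) y)
    (hsym : ∀ a b, fS a b = fS b a)
    (hec : ∀ a b, (v a - v b) ⬝ᵥ fS a b = ψ a - ψ b)
    -- the semi-discrete solution and formulation
    (uh : ℝ → (Fin (N + 1) ⊕ Fin (N + 1)) → Fin m → ℝ)
    (hd : ∀ k c, Differentiable ℝ (fun t => uh t k c))
    (hform : ∀ (t : ℝ) (k : Fin (N + 1) ⊕ Fin (N + 1)) (c : Fin m),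
      Sum.elim w w k * deriv (fun s => uh s k c) t
        + 2 * ∑ j, Qh k j * fS (uh t k) (uh t j) c = 0) :
    ∀ t : ℝ,
      deriv (fun s => ∑ k, Sum.elim w w k * Sfun (uh s k)) t
        + (∑ i, ∑ j, Bh i j * (v (uh t i) ⬝ᵥ fS (uh t i) (uh t j)))
        - (∑ i, ∑ j, Bh i j * ψ (uh t j)) = 0 :=
  coupled_two_element_entropy_conservation_general N m w Q Vf B hB hSBP hQ1 htL1 htR1 tL tR htL htR
    S hS Qh Bh hQh hBh Sfun v ψ fS hgrad hsym hec uh hd hform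
end

section
/- Assume the SBP property Q + Qᵀ = V_fᵀ B V_f, Q 1 = 0, and t_Lᵀ1 = t_Rᵀ1 = 1. With e_L = (1,0)ᵀ, e_R = (0,1)ᵀ, define the 3(N+3)×3(N+3) three-element global matrices, with blocks ordered as (volume nodes of element k, face nodes of element k) for k = 1,2,3: S_h having diagonal element blocks [[S, (1/2)V_fᵀB],[-(1/2)BV_f, 0]] for each element, inter-element coupling blocks (1/2)e_R e_Lᵀ from the face nodes of element k to the face nodes of element k+1 and -(1/2)e_L e_Rᵀ from the face nodes of element k+1 to the face nodes of element k (k = 1,2), and zeros elsewhere; B_h having the single nonzero blocks -e_L e_Lᵀ on the face nodes of element 1 and e_R e_Rᵀ on the face nodes of element 3; and Q_h = S_h + (1/2)B_h. Then Q_h 1 = 0 and Q_h + Q_hᵀ = B_h. -/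
/-!
Since `Q + Qᵀ = V_fᵀ B V_f` with `B` symmetric, `S` is skew-symmetric; then every element block
is skew-symmetric and the two coupling blocks are negative transposes of each other, so `S_h` is
skew-symmetric and `Q_h + Q_hᵀ = B_h` because `B_h` is symmetric.

For the row sums, `Q 1 = 0` and `V_f 1 = 1` make the volume rows of each element block sum to
zero and its face rows to `-(1/2) B 1 = (1/2)(e_L - e_R)`. The couplings add `(1/2) e_R` and
`-(1/2) e_L` to the face rows of the left and right neighbour, and `(1/2) B_h` adds `-(1/2) e_L`
and `(1/2) e_R` at the two ends of the mesh, so every face row of `Q_h` sums to zero.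
-/

open Matrix

namespace Matrix

theorem transpose_sub_half_smul_eq_neg {n K : Type*} [Field K] [NeZero (2 : K)]
    {Q X : Matrix n n K} (hQ : Q + Qᵀ = X) (hX : Xᵀ = X) :
    (Q - (1 / 2 : K) • X)ᵀ = -(Q - (1 / 2 : K) • X) := by
  have hQT : Qᵀ = X - Q := eq_sub_of_add_eq' hQ
  have hX2 : (1 / 2 : K) • X + (1 / 2 : K) • X = X := by rw [← add_smul, add_halves, one_smul]
  rw [transpose_sub, transpose_smul, hX, hQT]
  nth_rewrite 1 [← hX2]
  abel

theorem fromBlocks_transpose_eq_neg {l m α : Type*} [AddGroup α]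
    {A : Matrix l l α} {B : Matrix l m α} {C : Matrix m l α} {D : Matrix m m α}
    (hA : Aᵀ = -A) (hBC : Bᵀ = -C) (hD : Dᵀ = -D) :
    (fromBlocks A B C D)ᵀ = -fromBlocks A B C D := by
  have hCB : Cᵀ = -B := by rw [← neg_neg C, ← hBC, transpose_neg, transpose_transpose]
  rw [fromBlocks_transpose, fromBlocks_neg, hA, hBC, hCB, hD]

section RowSums

variable {l m n o α : Type*} [Fintype l] [Fintype m] [Semiring α]

theorem fromBlocks_mulVec_one (A : Matrix n l α) (B : Matrix n m α) (C : Matrix o l α)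
    (D : Matrix o m α) :
    fromBlocks A B C D *ᵥ 1 = Sum.elim (A *ᵥ 1 + B *ᵥ 1) (C *ᵥ 1 + D *ᵥ 1) := by
  rw [← Sum.elim_one_one, fromBlocks_mulVec, Sum.elim_comp_inl, Sum.elim_comp_inr]

theorem fromCols_mulVec_one (A : Matrix n l α) (B : Matrix n m α) :
    fromCols A B *ᵥ 1 = A *ᵥ 1 + B *ᵥ 1 := by
  rw [← Sum.elim_one_one, fromCols_mulVec_sumElim]

end RowSums

end Matrix

section DecoupledBlock

variable {n f R : Type*} [Fintype f] [CommRing R]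

def decoupledBlock (S : Matrix n n R) (V : Matrix f n R) (B : Matrix f f R) (c : R) :
    Matrix (n ⊕ f) (n ⊕ f) R :=
  fromBlocks S (c • (Vᵀ * B)) (-(c • (B * V))) 0

theorem decoupledBlock_transpose {S : Matrix n n R} {B : Matrix f f R} (hS : Sᵀ = -S)
    (hB : Bᵀ = B) (V : Matrix f n R) (c : R) :
    (decoupledBlock S V B c)ᵀ = -decoupledBlock S V B c := by
  refine fromBlocks_transpose_eq_neg hS ?_ (by simp)
  rw [transpose_smul, transpose_mul, transpose_transpose, hB, neg_neg]

theorem decoupledBlock_sub_mulVec_one [Fintype n] {Q : Matrix n n R} {V : Matrix f n R}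
    (hQ1 : Q *ᵥ 1 = 0) (hV1 : V *ᵥ 1 = 1) (B : Matrix f f R) (c : R) :
    decoupledBlock (Q - c • (Vᵀ * B * V)) V B c *ᵥ 1 = Sum.elim (0 : n → R) (-(c • (B *ᵥ 1))) := by
  have hS1 : (Q - c • (Vᵀ * B * V)) *ᵥ 1 = -(c • (Vᵀ * B) *ᵥ 1) := by
    rw [sub_mulVec, hQ1, smul_mulVec, ← mulVec_mulVec, hV1, zero_sub]
  have hBV1 : -(c • (B * V)) *ᵥ 1 = -(c • (B *ᵥ 1)) := by
    rw [neg_mulVec, smul_mulVec, ← mulVec_mulVec, hV1]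
  rw [decoupledBlock, ← Sum.elim_one_one, fromBlocks_mulVec, Sum.elim_comp_inl, Sum.elim_comp_inr,
    hS1, hBV1, smul_mulVec, neg_add_cancel, zero_mulVec, add_zero]

end DecoupledBlock

section BlockTridiag

variable {ι α : Type*}

def blockTridiag3 [Zero α] (A C D : Matrix ι ι α) : Matrix (ι ⊕ ι ⊕ ι) (ι ⊕ ι ⊕ ι) α :=
  fromBlocks A (fromCols C 0) (fromRows D 0) (fromBlocks A C D A)

theorem blockTridiag3_transpose [AddGroup α] {A C D : Matrix ι ι α} (hA : Aᵀ = -A)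
    (hC : Cᵀ = -D) : (blockTridiag3 A C D)ᵀ = -blockTridiag3 A C D := by
  refine fromBlocks_transpose_eq_neg hA ?_ (fromBlocks_transpose_eq_neg hA hC hA)
  rw [transpose_fromCols, hC, transpose_zero, fromRows_neg, neg_zero]

theorem blockTridiag3_mulVec_one [Fintype ι] [Semiring α] (A C D : Matrix ι ι α) :
    blockTridiag3 A C D *ᵥ 1 =
      Sum.elim (A *ᵥ 1 + C *ᵥ 1) (Sum.elim (D *ᵥ 1 + A *ᵥ 1 + C *ᵥ 1) (D *ᵥ 1 + A *ᵥ 1)) := by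
  rw [blockTridiag3, fromBlocks_mulVec_one, fromCols_mulVec_one, fromRows_mulVec,
    fromBlocks_mulVec_one, zero_mulVec]
  ext (i | i | i) <;> simp [add_assoc]

end BlockTridiag

theorem three_element_global_sbp_general
    (N : ℕ)
    (Q : Matrix (Fin (N + 1)) (Fin (N + 1)) ℝ)
    (Vf : Matrix (Fin 2) (Fin (N + 1)) ℝ)
    (B : Matrix (Fin 2) (Fin 2) ℝ)
    (hB : B = Matrix.diagonal ![(-1 : ℝ), 1])
    (hSBP : Q + Qᵀ = Vfᵀ * B * Vf)
    (hQ1 : Q *ᵥ (fun _ => (1 : ℝ)) = 0)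
    (htL1 : ∑ j, Vf 0 j = 1) (htR1 : ∑ j, Vf 1 j = 1)
    (eL eR : Fin 2 → ℝ) (heL : eL = ![1, 0]) (heR : eR = ![0, 1])
    (S : Matrix (Fin (N + 1)) (Fin (N + 1)) ℝ)
    (hS : S = Q - (1 / 2 : ℝ) • (Vfᵀ * B * Vf))
    -- single-element diagonal block and inter-element coupling blocks
    (Ablk Cpl CplT : Matrix (Fin (N + 1) ⊕ Fin 2) (Fin (N + 1) ⊕ Fin 2) ℝ)
    (hAblk : Ablk = Matrix.fromBlocks S ((1 / 2 : ℝ) • (Vfᵀ * B))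
      (-((1 / 2 : ℝ) • (B * Vf))) 0)
    (hCpl : Cpl = Matrix.fromBlocks 0 0 0 ((1 / 2 : ℝ) • Matrix.vecMulVec eR eL))
    (hCplT : CplT = Matrix.fromBlocks 0 0 0 (-((1 / 2 : ℝ) • Matrix.vecMulVec eL eR)))
    -- three-element global matrices
    (Sh Bh Qh : Matrix ((Fin (N + 1) ⊕ Fin 2) ⊕ ((Fin (N + 1) ⊕ Fin 2) ⊕ (Fin (N + 1) ⊕ Fin 2)))
                       ((Fin (N + 1) ⊕ Fin 2) ⊕ ((Fin (N + 1) ⊕ Fin 2) ⊕ (Fin (N + 1) ⊕ Fin 2))) ℝ)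
    (hSh : Sh = Matrix.fromBlocks
      Ablk (Matrix.fromCols Cpl 0)
      (Matrix.fromRows CplT 0) (Matrix.fromBlocks Ablk Cpl CplT Ablk))
    (hBh : Bh = Matrix.fromBlocks
      (Matrix.fromBlocks 0 0 0 (-(Matrix.vecMulVec eL eL))) 0
      0 (Matrix.fromBlocks 0 0 0 (Matrix.fromBlocks 0 0 0 (Matrix.vecMulVec eR eR))))
    (hQh : Qh = Sh + (1 / 2 : ℝ) • Bh) :
    Qh *ᵥ (fun _ => (1 : ℝ)) = 0 ∧ Qh + Qhᵀ = Bh := by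
  have hAblk' : Ablk = decoupledBlock S Vf B (1 / 2) := hAblk
  have hSh' : Sh = blockTridiag3 Ablk Cpl CplT := hSh
  constructor
  · have hV1 : Vf *ᵥ 1 = 1 := by
      ext i; fin_cases i <;> simp [mulVec, dotProduct, htL1, htR1]
    have hB1 : B *ᵥ 1 = eR - eL := by
      subst hB heL heR; ext i; fin_cases i <;> simp
    have hL1 : eL ⬝ᵥ 1 = 1 := by simp [heL, dotProduct, Fin.sum_univ_two]
    have hR1 : eR ⬝ᵥ 1 = 1 := by simp [heR, dotProduct, Fin.sum_univ_two]
    have hA1 : Ablk *ᵥ 1 = Sum.elim (0 : Fin (N + 1) → ℝ) ((1 / 2 : ℝ) • (eL - eR)) := by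
      rw [hAblk', hS, decoupledBlock_sub_mulVec_one hQ1 hV1, hB1, ← smul_neg, neg_sub]
    have hCpl1 : Cpl *ᵥ 1 = Sum.elim (0 : Fin (N + 1) → ℝ) ((1 / 2 : ℝ) • eR) := by
      simp only [hCpl, fromBlocks_mulVec_one, smul_mulVec, vecMulVec_mulVec, hL1,
        MulOpposite.op_one, one_smul, zero_mulVec, add_zero, zero_add]
    have hCplT1 : CplT *ᵥ 1 = Sum.elim (0 : Fin (N + 1) → ℝ) (-((1 / 2 : ℝ) • eL)) := by
      simp only [hCplT, fromBlocks_mulVec_one, neg_mulVec, smul_mulVec, vecMulVec_mulVec, hR1,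
        MulOpposite.op_one, one_smul, zero_mulVec, add_zero, zero_add]
    have hBh1 : Bh *ᵥ 1 = Sum.elim (Sum.elim (0 : Fin (N + 1) → ℝ) (-eL))
        (Sum.elim 0 (Sum.elim (0 : Fin (N + 1) → ℝ) eR)) := by
      simp only [hBh, fromBlocks_mulVec_one, neg_mulVec, vecMulVec_mulVec, hL1, hR1,
        MulOpposite.op_one, one_smul, zero_mulVec, add_zero, zero_add]
    show Qh *ᵥ 1 = 0
    rw [hQh, add_mulVec, smul_mulVec, hSh', blockTridiag3_mulVec_one, hBh1, hA1, hCpl1, hCplT1]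
    ext ((i | i) | (i | i) | (i | i)) <;> simp <;> ring
  · have hBT : Bᵀ = B := by rw [hB, diagonal_transpose]
    have hST : Sᵀ = -S := by
      rw [hS]
      refine transpose_sub_half_smul_eq_neg hSBP ?_
      rw [transpose_mul, transpose_mul, transpose_transpose, hBT, Matrix.mul_assoc]
    have hAT : Ablkᵀ = -Ablk := by rw [hAblk']; exact decoupledBlock_transpose hST hBT Vf _
    have hCplT' : Cplᵀ = -CplT := by simp [hCpl, hCplT, fromBlocks_transpose, fromBlocks_neg]
    have hBhT : Bhᵀ = Bh := by simp [hBh, fromBlocks_transpose]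
    rw [hQh, transpose_add, transpose_smul, hSh', blockTridiag3_transpose hAT hCplT', hBhT]
    module

/-- The three-element global decoupled operator `Q_h = S_h + (1/2) B_h` satisfies
`Q_h 1 = 0` and the SBP property `Q_h + Q_hᵀ = B_h`. -/
theorem three_element_global_sbp
    (N : ℕ) (w : Fin (N + 1) → ℝ)
    (W Q : Matrix (Fin (N + 1)) (Fin (N + 1)) ℝ)
    (hW : W = Matrix.diagonal w)
    (Vf : Matrix (Fin 2) (Fin (N + 1)) ℝ)
    (B : Matrix (Fin 2) (Fin 2) ℝ)
    (hB : B = Matrix.diagonal ![(-1 : ℝ), 1])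
    (hSBP : Q + Qᵀ = Vfᵀ * B * Vf)
    (hQ1 : Q *ᵥ (fun _ => (1 : ℝ)) = 0)
    (htL1 : ∑ j, Vf 0 j = 1) (htR1 : ∑ j, Vf 1 j = 1)
    (eL eR : Fin 2 → ℝ) (heL : eL = ![1, 0]) (heR : eR = ![0, 1])
    (S : Matrix (Fin (N + 1)) (Fin (N + 1)) ℝ)
    (hS : S = Q - (1 / 2 : ℝ) • (Vfᵀ * B * Vf))
    -- single-element diagonal block and inter-element coupling blocks
    (Ablk Cpl CplT : Matrix (Fin (N + 1) ⊕ Fin 2) (Fin (N + 1) ⊕ Fin 2) ℝ)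
    (hAblk : Ablk = Matrix.fromBlocks S ((1 / 2 : ℝ) • (Vfᵀ * B))
      (-((1 / 2 : ℝ) • (B * Vf))) 0)
    (hCpl : Cpl = Matrix.fromBlocks 0 0 0 ((1 / 2 : ℝ) • Matrix.vecMulVec eR eL))
    (hCplT : CplT = Matrix.fromBlocks 0 0 0 (-((1 / 2 : ℝ) • Matrix.vecMulVec eL eR)))
    -- three-element global matrices
    (Sh Bh Qh : Matrix ((Fin (N + 1) ⊕ Fin 2) ⊕ ((Fin (N + 1) ⊕ Fin 2) ⊕ (Fin (N + 1) ⊕ Fin 2)))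
                       ((Fin (N + 1) ⊕ Fin 2) ⊕ ((Fin (N + 1) ⊕ Fin 2) ⊕ (Fin (N + 1) ⊕ Fin 2))) ℝ)
    (hSh : Sh = Matrix.fromBlocks
      Ablk (Matrix.fromCols Cpl 0)
      (Matrix.fromRows CplT 0) (Matrix.fromBlocks Ablk Cpl CplT Ablk))
    (hBh : Bh = Matrix.fromBlocks
      (Matrix.fromBlocks 0 0 0 (-(Matrix.vecMulVec eL eL))) 0
      0 (Matrix.fromBlocks 0 0 0 (Matrix.fromBlocks 0 0 0 (Matrix.vecMulVec eR eR))))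
    (hQh : Qh = Sh + (1 / 2 : ℝ) • Bh) :
    Qh *ᵥ (fun _ => (1 : ℝ)) = 0 ∧ Qh + Qhᵀ = Bh :=
  three_element_global_sbp_general N Q Vf B hB hSBP hQ1 htL1 htR1 eL eR heL heR S hS Ablk Cpl CplT
    hAblk hCpl hCplT Sh Bh Qh hSh hBh hQh
end

section
/- Let W₁ be an (N+1)×(N+1) real diagonal matrix, Q₁ an (N+1)×(N+1) real matrix, V₁ a 2×(N+1) real matrix, and B₁ = diag(-1,1), satisfying the one-dimensional SBP property Q₁ + Q₁ᵀ = V₁ᵀ B₁ V₁. Define the two-dimensional tensor-product operators Q¹ = Q₁ ⊗ W₁ and Q² = W₁ ⊗ Q₁ (both (N+1)²×(N+1)²), the face interpolation matrix V_f = [V₁ ⊗ I_{N+1}; I_{N+1} ⊗ V₁] (of size (4N+4)×(N+1)²), and the (4N+4)×(4N+4) weighted boundary matrices B̂¹ = blockdiag(B₁ ⊗ W₁, 0_{2(N+1)}) and B̂² = blockdiag(0_{2(N+1)}, W₁ ⊗ B₁). Then the two-dimensional SBP properties hold: Q¹ + (Q¹)ᵀ = V_fᵀ B̂¹ V_f and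 Q² + (Q²)ᵀ = V_fᵀ B̂² V_f. -/
open Matrix BigOperators Kronecker

/-- **Tensor-product extension of the 1D generalized SBP property.** If
`Q₁ + Q₁ᵀ = V₁ᵀ B₁ V₁`, then the tensor-product operators `Q¹ = Q₁ ⊗ W₁` and
`Q² = W₁ ⊗ Q₁` satisfy the two-dimensional SBP properties
`Qⁱ + (Qⁱ)ᵀ = V_fᵀ B̂ⁱ V_f` with `V_f = [V₁ ⊗ I; I ⊗ V₁]`,
`B̂¹ = blockdiag(B₁ ⊗ W₁, 0)` and `B̂² = blockdiag(0, W₁ ⊗ B₁)`. -/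
theorem tensor_product_sbp
    (N : ℕ) (w : Fin (N + 1) → ℝ)
    (W1 Q1 : Matrix (Fin (N + 1)) (Fin (N + 1)) ℝ)
    (hW1 : W1 = Matrix.diagonal w)
    (V1 : Matrix (Fin 2) (Fin (N + 1)) ℝ)
    (B1 : Matrix (Fin 2) (Fin 2) ℝ)
    (hB1 : B1 = Matrix.diagonal ![(-1 : ℝ), 1])
    (hSBP : Q1 + Q1ᵀ = V1ᵀ * B1 * V1)
    (Qx Qy : Matrix (Fin (N + 1) × Fin (N + 1)) (Fin (N + 1) × Fin (N + 1)) ℝ)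
    (hQx : Qx = Q1 ⊗ₖ W1) (hQy : Qy = W1 ⊗ₖ Q1)
    (Vf : Matrix ((Fin 2 × Fin (N + 1)) ⊕ (Fin (N + 1) × Fin 2))
                 (Fin (N + 1) × Fin (N + 1)) ℝ)
    (hVf : Vf = Matrix.fromRows
      (V1 ⊗ₖ (1 : Matrix (Fin (N + 1)) (Fin (N + 1)) ℝ))
      ((1 : Matrix (Fin (N + 1)) (Fin (N + 1)) ℝ) ⊗ₖ V1))
    (Bx By : Matrix ((Fin 2 × Fin (N + 1)) ⊕ (Fin (N + 1) × Fin 2))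
                    ((Fin 2 × Fin (N + 1)) ⊕ (Fin (N + 1) × Fin 2)) ℝ)
    (hBx : Bx = Matrix.fromBlocks (B1 ⊗ₖ W1) 0 0 0)
    (hBy : By = Matrix.fromBlocks 0 0 0 (W1 ⊗ₖ B1)) :
    Qx + Qxᵀ = Vfᵀ * Bx * Vf ∧ Qy + Qyᵀ = Vfᵀ * By * Vf := by
  have hWt : W1ᵀ = W1 := by rw [hW1]; exact Matrix.diagonal_transpose w
  subst hQx hQy hVf hBx hBy
  rw [Matrix.transpose_fromRows]
  constructor
  · rw [Matrix.mul_assoc, Matrix.fromBlocks_mul_fromRows,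
      Matrix.fromCols_mul_fromRows]
    simp only [Matrix.zero_mul, Matrix.mul_zero, add_zero, zero_add,
      Matrix.fromRows_zero, Matrix.mul_zero]
    rw [← Matrix.kroneckerMap_transpose, ← Matrix.kroneckerMap_transpose,
      Matrix.transpose_one, hWt, ← Matrix.mul_kronecker_mul,
      ← Matrix.mul_kronecker_mul, Matrix.one_mul, Matrix.mul_one,
      ← Matrix.mul_assoc, ← hSBP]
    simp [Matrix.add_kronecker]
  · rw [Matrix.mul_assoc, Matrix.fromBlocks_mul_fromRows,
      Matrix.fromCols_mul_fromRows]
    simp only [Matrix.zero_mul, Matrix.mul_zero, add_zero, zero_add,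
      Matrix.fromRows_zero, Matrix.mul_zero]
    rw [← Matrix.kroneckerMap_transpose, ← Matrix.kroneckerMap_transpose,
      Matrix.transpose_one, hWt, ← Matrix.mul_kronecker_mul,
      ← Matrix.mul_kronecker_mul, Matrix.one_mul, Matrix.mul_one,
      ← Matrix.mul_assoc, ← hSBP]
    simp [Matrix.kronecker_add]
end

section
/- Let n, N_f ≥ 1, let Q be an n×n real matrix, V an N_f×n real matrix, and Λ an N_f×N_f real diagonal matrix, and assume the generalized SBP property Q + Qᵀ = Vᵀ Λ V. Define the (n+N_f)×(n+N_f) decoupled SBP operator Q_N = [[Q - (1/2)Vᵀ Λ V, (1/2)Vᵀ Λ],[-(1/2)Λ V, (1/2)Λ]]. Then Q_N + Q_Nᵀ = blockdiag(0_{n×n}, Λ). -/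
open Matrix BigOperators

/-- **Decoupled SBP property for general quadrature and basis.** If the generalized SBP
property `Q + Qᵀ = Vᵀ Λ V` holds with `Λ` diagonal, then the decoupled operator
`Q_N = [[Q - (1/2)Vᵀ Λ V, (1/2)Vᵀ Λ], [-(1/2)Λ V, (1/2)Λ]]` satisfies
`Q_N + Q_Nᵀ = blockdiag(0, Λ)`. -/
theorem decoupled_sbp_general
    (n Nf : ℕ) (hn : 1 ≤ n) (hNf : 1 ≤ Nf)
    (Q : Matrix (Fin n) (Fin n) ℝ)
    (V : Matrix (Fin Nf) (Fin n) ℝ)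
    (lam : Fin Nf → ℝ)
    (Λ : Matrix (Fin Nf) (Fin Nf) ℝ)
    (hΛ : Λ = Matrix.diagonal lam)
    (hSBP : Q + Qᵀ = Vᵀ * Λ * V)
    (QN : Matrix (Fin n ⊕ Fin Nf) (Fin n ⊕ Fin Nf) ℝ)
    (hQN : QN = Matrix.fromBlocks
      (Q - (1 / 2 : ℝ) • (Vᵀ * Λ * V)) ((1 / 2 : ℝ) • (Vᵀ * Λ))
      (-((1 / 2 : ℝ) • (Λ * V))) ((1 / 2 : ℝ) • Λ)) :
    QN + QNᵀ = Matrix.fromBlocks 0 0 0 Λ := by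
  have hΛT : Λᵀ = Λ := by rw [hΛ]; exact Matrix.diagonal_transpose lam
  subst hQN
  have h11 : (Q - (1 / 2 : ℝ) • (Vᵀ * Λ * V)) + (Q - (1 / 2 : ℝ) • (Vᵀ * Λ * V))ᵀ
      = (0 : Matrix (Fin n) (Fin n) ℝ) := by
    rw [transpose_sub, transpose_smul, Matrix.transpose_mul, Matrix.transpose_mul,
      transpose_transpose, hΛT, ← Matrix.mul_assoc, ← hSBP]
    module
  have h12 : (1 / 2 : ℝ) • (Vᵀ * Λ) + (-((1 / 2 : ℝ) • (Λ * V)))ᵀ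
      = (0 : Matrix (Fin n) (Fin Nf) ℝ) := by
    rw [transpose_neg, transpose_smul, Matrix.transpose_mul, hΛT]
    module
  have h21 : -((1 / 2 : ℝ) • (Λ * V)) + ((1 / 2 : ℝ) • (Vᵀ * Λ))ᵀ
      = (0 : Matrix (Fin Nf) (Fin n) ℝ) := by
    rw [transpose_smul, Matrix.transpose_mul, transpose_transpose, hΛT]
    module
  have h22 : (1 / 2 : ℝ) • Λ + ((1 / 2 : ℝ) • Λ)ᵀ = Λ := by
    rw [transpose_smul, hΛT]
    module
  rw [Matrix.fromBlocks_transpose, Matrix.fromBlocks_add, h11, h12, h21, h22]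
end
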